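/- arXiv:math/0008007 — 10 statements merged into one kernel-verified Lean document; each statement's English description precedes it below -/
import Mathlib

section
/- For every real number x with 1 ≤ x ≤ 2, one has Γ(1+x)^{2/x} ≤ (4/23)(x+1)(x+2), where Γ denotes the Euler Gamma function. -/
/-!
Taking logarithms, the claim becomes `2 log Γ(1 + x) ≤ x log (4 (x + 1) (x + 2) / 23)`. The left
side is convex (Bohr–Mollerup) and the logarithm on the right is concave, so on each of `[1, 3/2]`
and `[3/2, 2]` the left side lies below its chord and the logarithm above its chord. Writing
`x = p a + q b` with `p + q = 1`, the difference of the two bounds is the quadratic form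
`p² α + q² β + p q γ` whose coefficients only involve the values at the nodes, where
`Γ(2) = 1`, `Γ(5/2) = 3√π/4` and `Γ(3) = 2`. It is nonnegative once `α, β ≥ 0` and
`γ ≥ -2√(αβ)`, and these are numerical checks, using `log (1 + u) ≥ 2u / (u + 2)`.
-/

open Real Set

theorem quadratic_form_nonneg {α β γ c p q : ℝ} (hp : 0 ≤ p) (hq : 0 ≤ q) (hα : 0 ≤ α)
    (hβ : 0 ≤ β) (hcγ : c ≤ γ) (hc : c ^ 2 ≤ 4 * α * β) :
    0 ≤ p ^ 2 * α + q ^ 2 * β + p * q * γ := by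
  have hc_abs : |c| ≤ 2 * √α * √β := by
    rw [mul_assoc, ← sqrt_mul hα, ← sqrt_mul_self zero_le_two, ← sqrt_mul (by norm_num)]
    exact abs_le_sqrt (by linarith)
  nlinarith [sq_nonneg (p * √α - q * √β), neg_abs_le c, mul_nonneg hp hq, sq_sqrt hα, sq_sqrt hβ]

theorem le_mul_of_convexOn_of_concaveOn {s : Set ℝ} {f g : ℝ → ℝ} (hf : ConvexOn ℝ s f)
    (hg : ConcaveOn ℝ s g) {a b c x : ℝ} (ha : a ∈ s) (hb : b ∈ s) (ha₀ : 0 ≤ a)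
    (hx : x ∈ Icc a b) (hα : 0 ≤ a * g a - f a) (hβ : 0 ≤ b * g b - f b)
    (hcγ : c ≤ a * g b + b * g a - f a - f b)
    (hc : c ^ 2 ≤ 4 * (a * g a - f a) * (b * g b - f b)) :
    f x ≤ x * g x := by
  have hb₀ : 0 ≤ b := ha₀.trans (hx.1.trans hx.2)
  rw [← segment_eq_Icc (hx.1.trans hx.2)] at hx
  obtain ⟨p, q, hp, hq, hpq, rfl⟩ := hx
  simp only [smul_eq_mul]
  have hf_chord : f (p * a + q * b) ≤ p * f a + q * f b := by
    simpa only [smul_eq_mul] using hf.2 ha hb hp hq hpq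
  have hg_chord : p * g a + q * g b ≤ g (p * a + q * b) := by
    simpa only [smul_eq_mul] using hg.2 ha hb hp hq hpq
  have hx₀ : 0 ≤ p * a + q * b := by positivity
  obtain rfl : q = 1 - p := by linarith
  have hchords : (p * a + (1 - p) * b) * (p * g a + (1 - p) * g b) - (p * f a + (1 - p) * f b) =
      p ^ 2 * (a * g a - f a) + (1 - p) ^ 2 * (b * g b - f b) +
        p * (1 - p) * (a * g b + b * g a - f a - f b) := by ring
  linarith [mul_le_mul_of_nonneg_left hg_chord hx₀, quadratic_form_nonneg hp hq hα hβ hcγ hc]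

theorem convexOn_log_Gamma_one_add : ConvexOn ℝ (Ioi (-1)) fun x ↦ log (Gamma (1 + x)) := by
  have := convexOn_log_Gamma.translate_right 1
  rwa [preimage_const_add_Ioi, zero_sub] at this

theorem concaveOn_log_add (c : ℝ) : ConcaveOn ℝ (Ioi (-c)) fun x ↦ log (x + c) := by
  have := strictConcaveOn_log_Ioi.concaveOn.translate_left c
  rwa [preimage_const_add_Ioi, zero_sub] at this

theorem concaveOn_log_mul_add_one_mul_add_two {c : ℝ} (hc : 0 < c) :
    ConcaveOn ℝ (Ioi (-1)) fun x ↦ log (c * (x + 1) * (x + 2)) := by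
  have h2 : ConcaveOn ℝ (Ioi (-1)) fun x ↦ log (x + 2) :=
    (concaveOn_log_add 2).subset (Ioi_subset_Ioi (by norm_num)) (convex_Ioi _)
  refine (((concaveOn_const (log c) (convex_Ioi _)).add (concaveOn_log_add 1)).add h2).congr ?_
  intro x (hx : -1 < x)
  simp only [Pi.add_apply]
  rw [log_mul (mul_pos hc (by linarith)).ne' (by linarith), log_mul hc.ne' (by linarith)]

theorem two_mul_sub_div_add_le_log_div {y z : ℝ} (hy : 0 < y) (hyz : y ≤ z) :
    2 * (z - y) / (z + y) ≤ log (z / y) := by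
  have := le_log_one_add_of_nonneg (x := z / y - 1) (by rwa [sub_nonneg, one_le_div hy])
  rwa [add_sub_cancel, show 2 * (z / y - 1) / (z / y - 1 + 2) = 2 * (z - y) / (z + y) by
    field_simp; ring] at this

theorem Gamma_five_halves_sq : Gamma (5 / 2) ^ 2 = 9 * π / 16 := by
  rw [show (5 / 2 : ℝ) = 1 / 2 + 1 + 1 by norm_num, Gamma_add_one (by norm_num),
    Gamma_add_one (by norm_num), Gamma_one_half_eq]
  ring_nf
  rw [sq_sqrt pi_pos.le]

theorem two_mul_log_Gamma_five_halves_lt : 2 * log (Gamma (5 / 2)) < 0.5696 := by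
  have h9π : 9 * π < 32 := by linarith [pi_lt_d4]
  have hsplit : log (9 * π / 16) + log (32 / (9 * π)) = log 2 := by
    rw [← log_mul (by positivity) (by positivity)]
    congr 1; field_simp; norm_num
  have hpade := two_mul_sub_div_add_le_log_div (by positivity) h9π.le
  have hpade_num : 0.1236 ≤ 2 * (32 - 9 * π) / (32 + 9 * π) := by
    rw [le_div_iff₀ (by positivity)]; nlinarith [pi_lt_d4]
  have hlog_sq := log_pow (Gamma (5 / 2)) 2
  push_cast at hlog_sq
  rw [← hlog_sq, Gamma_five_halves_sq]
  linarith [log_two_lt_d9]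

theorem log_24_div_23_gt : 0.0425 < log (24 / 23) := by
  have := two_mul_sub_div_add_le_log_div (y := 23) (z := 24) (by norm_num) (by norm_num)
  norm_num at this ⊢; linarith

theorem log_35_div_23_gt : 0.418 < log (35 / 23) := by
  have h₁ := two_mul_sub_div_add_le_log_div (y := 4) (z := 5) (by norm_num) (by norm_num)
  have h₂ := two_mul_sub_div_add_le_log_div (y := 23) (z := 28) (by norm_num) (by norm_num)
  rw [show (35 / 23 : ℝ) = 5 / 4 * (28 / 23) by norm_num, log_mul (by norm_num) (by norm_num)]
  norm_num at h₁ h₂; linarith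

theorem two_mul_log_Gamma_one_add_le {x : ℝ} (hx₁ : 1 ≤ x) (hx₂ : x ≤ 2) :
    2 * log (Gamma (1 + x)) ≤ x * log (4 / 23 * (x + 1) * (x + 2)) := by
  have hf : ConvexOn ℝ (Ioi (-1)) fun x ↦ 2 * log (Gamma (1 + x)) :=
    convexOn_log_Gamma_one_add.smul zero_le_two
  have hg := concaveOn_log_mul_add_one_mul_add_two (c := 4 / 23) (by norm_num)
  have hℓ₁ := log_24_div_23_gt
  have hℓ₂ := log_35_div_23_gt
  have hΓ := two_mul_log_Gamma_five_halves_lt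
  have hβ : 0.0574 < 3 / 2 * log (35 / 23) - 2 * log (Gamma (5 / 2)) := by linarith
  have hlog_48 : log (48 / 23) = log 2 + log (24 / 23) := by
    rw [← log_mul (by norm_num) (by norm_num)]; norm_num
  -- the mixed coefficients `γ` are `≈ -0.0857` on `[1, 3/2]` and `≈ -0.0124` on `[3/2, 2]`
  rcases le_total x (3 / 2) with h | h
  · refine le_mul_of_convexOn_of_concaveOn hf hg (a := 1) (b := 3 / 2) (c := -0.0879)
      (by norm_num) (by norm_num) (by norm_num) ⟨hx₁, h⟩ ?_ ?_ ?_ ?_ <;> norm_num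
    all_goals nlinarith
  · refine le_mul_of_convexOn_of_concaveOn hf hg (a := 3 / 2) (b := 2) (c := -0.02)
      (by norm_num) (by norm_num) (by norm_num) ⟨h, hx₂⟩ ?_ ?_ ?_ ?_ <;> norm_num [hlog_48]
    all_goals nlinarith [log_two_lt_d9]

/-- For every real number `1 ≤ x ≤ 2`, `Γ(1+x)^(2/x) ≤ (4/23)(x+1)(x+2)`. -/
theorem gamma_upper_bound_two (x : ℝ) (hx1 : 1 ≤ x) (hx2 : x ≤ 2) :
    Real.Gamma (1 + x) ^ (2 / x) ≤ (4 / 23) * (x + 1) * (x + 2) := by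
  have hx₀ : 0 < x := by linarith
  rw [rpow_def_of_pos (Gamma_pos_of_pos (by linarith)), ← le_log_iff_exp_le (by positivity),
    mul_div_assoc', div_le_iff₀ hx₀, mul_comm, mul_comm (log _)]
  exact two_mul_log_Gamma_one_add_le hx1 hx2
end

section
/- For every real number x ≥ 5, one has Γ(1+x)^{2/x} ≥ (2/(π√23)) · x · √((x+3)(x+7)), where Γ denotes the Euler Gamma function. -/
set_option maxHeartbeats 1600000

open Real

noncomputable def cG : ℝ := 2 / (Real.pi * Real.sqrt 23)

lemma cG_pos : 0 < cG := by
  unfold cG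
  have := Real.pi_pos
  positivity

lemma cG_sq : cG ^ 2 = 4 / (23 * Real.pi ^ 2) := by
  unfold cG
  rw [div_pow, mul_pow, Real.sq_sqrt (by norm_num : (0:ℝ) ≤ 23)]
  ring

lemma cG_sq_le : cG ^ 2 ≤ 4 / 227 := by
  rw [cG_sq]
  have h := Real.pi_gt_d6
  rw [div_le_div_iff₀ (by positivity) (by norm_num)]
  nlinarith

lemma exp5_lt : Real.exp 5 < 149 := by
  have h := Real.exp_one_lt_d9
  have h5 : Real.exp 5 = Real.exp 1 ^ 5 := by
    rw [Real.exp_one_pow]; norm_num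
  rw [h5]
  calc Real.exp 1 ^ 5 < 2.7182818286 ^ 5 :=
        pow_lt_pow_left₀ h (Real.exp_pos 1).le (by norm_num)
    _ < 149 := by norm_num

lemma exp_tenth_le : Real.exp (1/10) ≤ 10/9 := by
  have h := Real.add_one_le_exp (-(1/10) : ℝ)
  rw [Real.exp_neg] at h
  have hp := Real.exp_pos (1/10 : ℝ)
  have h2 : (9/10 : ℝ) * Real.exp (1/10) ≤ 1 := by
    have := mul_le_mul_of_nonneg_right h hp.le
    rw [inv_mul_cancel₀ hp.ne'] at this
    nlinarith
  nlinarith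

lemma log_cG_le : Real.log cG ≤ -2 := by
  have h1 : Real.log (cG ^ 2) ≤ Real.log (4/227) :=
    Real.log_le_log (pow_pos cG_pos 2) cG_sq_le
  have h2 : Real.log ((4:ℝ)/227) ≤ -4 := by
    rw [Real.log_le_iff_le_exp (by norm_num)]
    have : Real.exp (-4 : ℝ) = (Real.exp 4)⁻¹ := by
      rw [← Real.exp_neg]
    rw [this]
    have h4 : Real.exp 4 < 55 := by
      have h := Real.exp_one_lt_d9
      have : Real.exp 4 = Real.exp 1 ^ 4 := by rw [Real.exp_one_pow]; norm_num
      rw [this]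
      calc Real.exp 1 ^ 4 < 2.7182818286 ^ 4 :=
            pow_lt_pow_left₀ h (Real.exp_pos 1).le (by norm_num)
        _ < 55 := by norm_num
    have h4p := Real.exp_pos (4:ℝ)
    rw [inv_eq_one_div, le_div_iff₀ h4p]
    nlinarith
  rw [Real.log_pow] at h1
  push_cast at h1
  linarith

lemma log_le_add (b d : ℝ) (hb : 0 < b) (hbd : 0 < b + d) :
    Real.log (b + d) ≤ Real.log b + d / b := by
  have h := Real.log_le_sub_one_of_pos (show 0 < (b+d)/b by positivity)
  rw [Real.log_div hbd.ne' hb.ne'] at h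
  have h2 : (b+d)/b - 1 = d/b := by field_simp; ring
  linarith

-- chord upper bound for x ↦ x * log (x + a) on [p,q]
lemma chord_term {p q s : ℝ} (a : ℝ) (hp : 0 < p) (hq : 0 < q) (ha : 0 ≤ a)
    (hs0 : 0 ≤ s) (hs1 : s ≤ 1) :
    ((1-s)*p + s*q) * Real.log ((1-s)*p + s*q + a) ≤
      (1-s)*(p*Real.log (p+a)) + s*(q*Real.log (q+a)) := by
  have hpa : (0:ℝ) < p + a := by linarith
  have hqa : (0:ℝ) < q + a := by linarith
  have h1 : ((1-s)*(p+a) + s*(q+a)) * Real.log ((1-s)*(p+a) + s*(q+a)) ≤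
      (1-s)*((p+a)*Real.log (p+a)) + s*((q+a)*Real.log (q+a)) := by
    have := Real.convexOn_mul_log.2 (Set.mem_Ici.2 hpa.le) (Set.mem_Ici.2 hqa.le)
      (by linarith : (0:ℝ) ≤ 1 - s) hs0 (by ring)
    simpa [smul_eq_mul] using this
  have h2 : (1-s)*Real.log (p+a) + s*Real.log (q+a) ≤
      Real.log ((1-s)*(p+a) + s*(q+a)) := by
    have := strictConcaveOn_log_Ioi.concaveOn.2 (Set.mem_Ioi.2 hpa) (Set.mem_Ioi.2 hqa)
      (by linarith : (0:ℝ) ≤ 1 - s) hs0 (by ring)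
    simpa [smul_eq_mul] using this
  have hXa : (1-s)*p + s*q + a = (1-s)*(p+a) + s*(q+a) := by ring
  rw [hXa]
  nlinarith [mul_le_mul_of_nonneg_left h2 ha]

noncomputable def Gf (x : ℝ) : ℝ :=
  2*x*Real.log cG + 2*(x*Real.log x)
    + x*Real.log (x+3) + x*Real.log (x+7)

lemma Gf_chord {p q s : ℝ} (hp : 0 < p) (hq : 0 < q) (hs0 : 0 ≤ s) (hs1 : s ≤ 1) :
    Gf ((1-s)*p + s*q) ≤ (1-s)*Gf p + s*Gf q := by
  have h0 := chord_term 0 hp hq le_rfl hs0 hs1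
  have h3 := chord_term 3 hp hq (by norm_num) hs0 hs1
  have h7 := chord_term 7 hp hq (by norm_num) hs0 hs1
  simp only [add_zero] at h0
  unfold Gf
  nlinarith [h0, h3, h7]

-- left secant lower bound for log Gamma
lemma secL (m : ℕ) {x : ℝ} (hx : (m:ℝ)+1 < x) :
    Real.log ((m+1).factorial) + (x-((m:ℝ)+1)) * Real.log ((m:ℝ)+1) ≤
      Real.log (Real.Gamma (1+x)) := by
  have hm1 : (0:ℝ) < (m:ℝ)+1 := by positivity
  have h := Real.convexOn_log_Gamma.slope_mono_adjacent
    (Set.mem_Ioi.2 hm1) (Set.mem_Ioi.2 (show (0:ℝ) < 1+x by linarith))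
    (show (m:ℝ)+1 < (m:ℝ)+2 by linarith) (show (m:ℝ)+2 < 1+x by linarith)
  have e1 : (Real.log ∘ Real.Gamma) ((m:ℝ)+1) = Real.log (m.factorial) := by
    simp only [Function.comp_apply]
    rw [Real.Gamma_nat_eq_factorial]
  have e2 : (Real.log ∘ Real.Gamma) ((m:ℝ)+2) = Real.log ((m+1).factorial) := by
    simp only [Function.comp_apply]
    have : ((m:ℝ)+2) = ((m+1 : ℕ) : ℝ) + 1 := by push_cast; ring
    rw [this, Real.Gamma_nat_eq_factorial]
  have e3 : (Real.log ∘ Real.Gamma) (1+x) = Real.log (Real.Gamma (1+x)) := rfl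
  rw [e1, e2, e3] at h
  have hfac : Real.log ((m+1).factorial) = Real.log ((m:ℝ)+1) + Real.log (m.factorial) := by
    have : (((m+1).factorial : ℝ)) = ((m:ℝ)+1) * (m.factorial : ℝ) := by
      rw [Nat.factorial_succ]; push_cast; ring
    rw [this, Real.log_mul (by positivity) (by positivity)]
  have hd : (0:ℝ) < 1 + x - ((m:ℝ)+2) := by linarith
  rw [div_le_div_iff₀ (by norm_num) hd] at h
  nlinarith [h]

-- right secant lower bound for log Gamma
lemma secR (k : ℕ) {x : ℝ} (hx0 : 0 < x) (hx : x < (k:ℝ)+1) :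
    Real.log ((k+1).factorial) - ((k:ℝ)+1-x) * Real.log ((k:ℝ)+2) ≤
      Real.log (Real.Gamma (1+x)) := by
  have h := Real.convexOn_log_Gamma.slope_mono_adjacent
    (Set.mem_Ioi.2 (show (0:ℝ) < 1+x by linarith))
    (Set.mem_Ioi.2 (show (0:ℝ) < (k:ℝ)+3 by positivity))
    (show (1:ℝ)+x < (k:ℝ)+2 by linarith) (show (k:ℝ)+2 < (k:ℝ)+3 by linarith)
  have e2 : (Real.log ∘ Real.Gamma) ((k:ℝ)+2) = Real.log ((k+1).factorial) := by
    simp only [Function.comp_apply]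
    have : ((k:ℝ)+2) = ((k+1 : ℕ) : ℝ) + 1 := by push_cast; ring
    rw [this, Real.Gamma_nat_eq_factorial]
  have e3 : (Real.log ∘ Real.Gamma) ((k:ℝ)+3) = Real.log ((k+2).factorial) := by
    simp only [Function.comp_apply]
    have : ((k:ℝ)+3) = ((k+2 : ℕ) : ℝ) + 1 := by push_cast; ring
    rw [this, Real.Gamma_nat_eq_factorial]
  have e1 : (Real.log ∘ Real.Gamma) (1+x) = Real.log (Real.Gamma (1+x)) := rfl
  rw [e1, e2, e3] at h
  have hfac : Real.log ((k+2).factorial) = Real.log ((k:ℝ)+2) + Real.log ((k+1).factorial) := by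
    have : (((k+2).factorial : ℝ)) = ((k:ℝ)+2) * ((k+1).factorial : ℝ) := by
      rw [show k+2 = (k+1)+1 by ring, Nat.factorial_succ]; push_cast; ring
    rw [this, Real.log_mul (by positivity) (by positivity)]
  have hd : (0:ℝ) < (k:ℝ)+2 - (1+x) := by linarith
  rw [div_le_div_iff₀ hd (by norm_num)] at h
  nlinarith [h]

lemma sqrt_pi_le_stirling (m : ℕ) : Real.sqrt π ≤ Stirling.stirlingSeq (m+1) := by
  have ht : Filter.Tendsto (Stirling.stirlingSeq ∘ Nat.succ) Filter.atTop (nhds (Real.sqrt π)) := by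
    have h2 : Filter.Tendsto (fun n : ℕ => n + 1) Filter.atTop Filter.atTop :=
      Filter.tendsto_add_atTop_nat 1
    exact Stirling.tendsto_stirlingSeq_sqrt_pi.comp h2
  exact Stirling.stirlingSeq'_antitone.le_of_tendsto ht m

lemma stirling4 (n : ℕ) (hn : 1 ≤ n) :
    2*Real.log (2*π*(n:ℝ)) + 4*(n:ℝ)*Real.log n - 4*(n:ℝ) ≤ 4 * Real.log (n.factorial) := by
  obtain ⟨m, rfl⟩ : ∃ m, n = m + 1 := ⟨n-1, by omega⟩
  have h := sqrt_pi_le_stirling m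
  set n := m + 1
  have hn0 : (0:ℝ) < (n:ℕ) := by positivity
  unfold Stirling.stirlingSeq at h
  have hd : (0:ℝ) < Real.sqrt (2*(n:ℕ)) * (((n:ℕ):ℝ)/Real.exp 1)^(n:ℕ) := by
    apply mul_pos (Real.sqrt_pos.2 (by positivity))
    exact pow_pos (by positivity) _
  rw [le_div_iff₀ hd] at h
  have hπ := Real.pi_pos
  have hlog := Real.log_le_log (by positivity) h
  rw [Real.log_mul (by positivity) (by positivity), Real.log_mul (by positivity) (by positivity),
      Real.log_sqrt hπ.le, Real.log_sqrt (by positivity), Real.log_pow,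
      Real.log_div (by positivity) (Real.exp_ne_zero 1), Real.log_exp] at hlog
  have hsplit : Real.log (2*π*(n:ℕ)) = Real.log (2*(n:ℕ)) + Real.log π := by
    rw [show 2*π*((n:ℕ):ℝ) = (2*(n:ℕ))*π by ring, Real.log_mul (by positivity) (by positivity)]
  rw [hsplit]
  nlinarith [hlog]

lemma redA (n : ℕ) (hn : 1 ≤ n)
    (h : ((4:ℝ)/227)^n * (n:ℝ)^(2*n) * ((n:ℝ)+3)^n * ((n:ℝ)+7)^n ≤ ((n.factorial : ℝ))^4) :
    Gf n ≤ 4 * Real.log (n.factorial) := by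
  have hc := cG_pos
  have hn0 : (0:ℝ) < n := by positivity
  have p0 : (0:ℝ) < cG^(2*n) := pow_pos hc _
  have p1 : (0:ℝ) < (n:ℝ)^(2*n) := by positivity
  have p2 : (0:ℝ) < ((n:ℝ)+3)^n := by positivity
  have p3 : (0:ℝ) < ((n:ℝ)+7)^n := by positivity
  have hcn : cG ^ (2*n) ≤ ((4:ℝ)/227)^n := by
    rw [pow_mul]
    exact pow_le_pow_left₀ (sq_nonneg cG) cG_sq_le n
  have hGf : Gf n = Real.log (cG^(2*n) * (n:ℝ)^(2*n) * ((n:ℝ)+3)^n * ((n:ℝ)+7)^n) := by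
    rw [Real.log_mul (mul_pos (mul_pos p0 p1) p2).ne' p3.ne',
        Real.log_mul (mul_pos p0 p1).ne' p2.ne',
        Real.log_mul p0.ne' p1.ne',
        Real.log_pow, Real.log_pow, Real.log_pow, Real.log_pow]
    unfold Gf
    push_cast
    ring
  rw [hGf]
  have hle : cG^(2*n) * (n:ℝ)^(2*n) * ((n:ℝ)+3)^n * ((n:ℝ)+7)^n ≤ ((n.factorial : ℝ))^4 := by
    refine le_trans ?_ h
    have := mul_le_mul_of_nonneg_right (mul_le_mul_of_nonneg_right
      (mul_le_mul_of_nonneg_right hcn p1.le) p2.le) p3.le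
    linarith
  calc Real.log (cG^(2*n) * (n:ℝ)^(2*n) * ((n:ℝ)+3)^n * ((n:ℝ)+7)^n)
      ≤ Real.log (((n.factorial : ℝ))^4) :=
        Real.log_le_log (mul_pos (mul_pos (mul_pos p0 p1) p2) p3) hle
    _ = 4 * Real.log (n.factorial) := by rw [Real.log_pow]; push_cast; ring

lemma redB (n : ℕ) (hn : 1 ≤ n)
    (h : ((4:ℝ)/227)^(2*n+1) * ((n:ℝ)+1/2)^(4*n+2) * ((n:ℝ)+7/2)^(2*n+1) * ((n:ℝ)+15/2)^(2*n+1)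
        ≤ ((n.factorial : ℝ))^8 * (n:ℝ)^4) :
    Gf ((n:ℝ)+1/2) ≤ 4 * Real.log (n.factorial) + 2 * Real.log n := by
  have hc := cG_pos
  have hn0 : (0:ℝ) < n := by positivity
  have p0 : (0:ℝ) < cG^(4*n+2) := pow_pos hc _
  have p1 : (0:ℝ) < ((n:ℝ)+1/2)^(4*n+2) := by positivity
  have p2 : (0:ℝ) < ((n:ℝ)+7/2)^(2*n+1) := by positivity
  have p3 : (0:ℝ) < ((n:ℝ)+15/2)^(2*n+1) := by positivity
  have hcn : cG ^ (4*n+2) ≤ ((4:ℝ)/227)^(2*n+1) := by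
    rw [show 4*n+2 = 2*(2*n+1) by ring, pow_mul]
    exact pow_le_pow_left₀ (sq_nonneg cG) cG_sq_le _
  have hGf : 2 * Gf ((n:ℝ)+1/2) =
      Real.log (cG^(4*n+2) * ((n:ℝ)+1/2)^(4*n+2) * ((n:ℝ)+7/2)^(2*n+1) * ((n:ℝ)+15/2)^(2*n+1)) := by
    rw [Real.log_mul (mul_pos (mul_pos p0 p1) p2).ne' p3.ne',
        Real.log_mul (mul_pos p0 p1).ne' p2.ne',
        Real.log_mul p0.ne' p1.ne',
        Real.log_pow, Real.log_pow, Real.log_pow, Real.log_pow]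
    unfold Gf
    push_cast
    ring_nf
  have hle : cG^(4*n+2) * ((n:ℝ)+1/2)^(4*n+2) * ((n:ℝ)+7/2)^(2*n+1) * ((n:ℝ)+15/2)^(2*n+1)
      ≤ ((n.factorial : ℝ))^8 * (n:ℝ)^4 := by
    refine le_trans ?_ h
    have := mul_le_mul_of_nonneg_right (mul_le_mul_of_nonneg_right
      (mul_le_mul_of_nonneg_right hcn p1.le) p2.le) p3.le
    linarith
  have h2 : 2 * Gf ((n:ℝ)+1/2) ≤ Real.log (((n.factorial : ℝ))^8 * (n:ℝ)^4) := by
    rw [hGf]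
    exact Real.log_le_log (mul_pos (mul_pos (mul_pos p0 p1) p2) p3) hle
  rw [Real.log_mul (by positivity) (by positivity), Real.log_pow, Real.log_pow] at h2
  push_cast at h2
  linarith

lemma redC (n : ℕ) (hn : 1 ≤ n)
    (h : ((4:ℝ)/227)^(2*n+1) * ((n:ℝ)+1/2)^(4*n+2) * ((n:ℝ)+7/2)^(2*n+1) * ((n:ℝ)+15/2)^(2*n+1)
          * ((n:ℝ)+2)^4 ≤ (((n+1).factorial : ℝ))^8) :
    Gf ((n:ℝ)+1/2) ≤ 4 * Real.log ((n+1).factorial) - 2 * Real.log ((n:ℝ)+2) := by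
  have hc := cG_pos
  have hn0 : (0:ℝ) < n := by positivity
  have p0 : (0:ℝ) < cG^(4*n+2) := pow_pos hc _
  have p1 : (0:ℝ) < ((n:ℝ)+1/2)^(4*n+2) := by positivity
  have p2 : (0:ℝ) < ((n:ℝ)+7/2)^(2*n+1) := by positivity
  have p3 : (0:ℝ) < ((n:ℝ)+15/2)^(2*n+1) := by positivity
  have p4 : (0:ℝ) < ((n:ℝ)+2)^4 := by positivity
  have hcn : cG ^ (4*n+2) ≤ ((4:ℝ)/227)^(2*n+1) := by
    rw [show 4*n+2 = 2*(2*n+1) by ring, pow_mul]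
    exact pow_le_pow_left₀ (sq_nonneg cG) cG_sq_le _
  have hGf : 2 * Gf ((n:ℝ)+1/2) + 4 * Real.log ((n:ℝ)+2) =
      Real.log (cG^(4*n+2) * ((n:ℝ)+1/2)^(4*n+2) * ((n:ℝ)+7/2)^(2*n+1) * ((n:ℝ)+15/2)^(2*n+1)
        * ((n:ℝ)+2)^4) := by
    rw [Real.log_mul (mul_pos (mul_pos (mul_pos p0 p1) p2) p3).ne' p4.ne',
        Real.log_mul (mul_pos (mul_pos p0 p1) p2).ne' p3.ne',
        Real.log_mul (mul_pos p0 p1).ne' p2.ne',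
        Real.log_mul p0.ne' p1.ne',
        Real.log_pow, Real.log_pow, Real.log_pow, Real.log_pow, Real.log_pow]
    unfold Gf
    push_cast
    ring_nf
  have hle : cG^(4*n+2) * ((n:ℝ)+1/2)^(4*n+2) * ((n:ℝ)+7/2)^(2*n+1) * ((n:ℝ)+15/2)^(2*n+1) * ((n:ℝ)+2)^4
      ≤ (((n+1).factorial : ℝ))^8 := by
    refine le_trans ?_ h
    have := mul_le_mul_of_nonneg_right (mul_le_mul_of_nonneg_right (mul_le_mul_of_nonneg_right
      (mul_le_mul_of_nonneg_right hcn p1.le) p2.le) p3.le) p4.le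
    linarith
  have h2 : 2 * Gf ((n:ℝ)+1/2) + 4 * Real.log ((n:ℝ)+2) ≤ Real.log ((((n+1).factorial : ℝ))^8) := by
    rw [hGf]
    exact Real.log_le_log (mul_pos (mul_pos (mul_pos (mul_pos p0 p1) p2) p3) p4) hle
  rw [Real.log_pow] at h2
  push_cast at h2
  linarith

lemma two_pi_log (M : ℝ) (hM : 30 ≤ M) : (51:ℝ)/5 ≤ 2 * Real.log (2*π*M) := by
  have hπ := Real.pi_gt_d6
  have hpos : (0:ℝ) < 2*π*M := by nlinarith
  have hexp : Real.exp (51/10) ≤ 2*π*M := by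
    have h1 : Real.exp (51/10 : ℝ) = Real.exp 5 * Real.exp (1/10) := by
      rw [← Real.exp_add]; norm_num
    have h2 : Real.exp 5 * Real.exp (1/10) ≤ 149 * (10/9) := by
      have := exp5_lt
      have := exp_tenth_le
      have := Real.exp_pos (5:ℝ)
      have := Real.exp_pos (1/10:ℝ)
      nlinarith
    have h3 : (149:ℝ) * (10/9) ≤ 2*π*M := by nlinarith
    linarith [h1.le, h2, h3]
  have := (Real.le_log_iff_exp_le hpos).2 hexp
  linarith

lemma condA_tail (n : ℕ) (hn : 30 ≤ n) : Gf n ≤ 4 * Real.log (n.factorial) := by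
  have hn0 : (0:ℝ) < n := by positivity
  have hS := stirling4 n (by omega)
  have hE := two_pi_log n (by exact_mod_cast hn)
  have h3 : Real.log ((n:ℝ)+3) ≤ Real.log n + 3/(n:ℝ) := log_le_add n 3 hn0 (by linarith)
  have h7 : Real.log ((n:ℝ)+7) ≤ Real.log n + 7/(n:ℝ) := log_le_add n 7 hn0 (by linarith)
  have hc : 2*(n:ℝ)*Real.log cG ≤ -4*n := by
    have := mul_le_mul_of_nonneg_left log_cG_le (by positivity : (0:ℝ) ≤ 2*(n:ℝ))
    nlinarith
  have e3 : (n:ℝ)*Real.log ((n:ℝ)+3) ≤ (n:ℝ)*Real.log n + 3 := by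
    have h := mul_le_mul_of_nonneg_left h3 hn0.le
    have e : (n:ℝ)*(3/(n:ℝ)) = 3 := by field_simp
    nlinarith
  have e7 : (n:ℝ)*Real.log ((n:ℝ)+7) ≤ (n:ℝ)*Real.log n + 7 := by
    have h := mul_le_mul_of_nonneg_left h7 hn0.le
    have e : (n:ℝ)*(7/(n:ℝ)) = 7 := by field_simp
    nlinarith
  unfold Gf
  linarith

lemma condB_tail (n : ℕ) (hn : 30 ≤ n) :
    Gf ((n:ℝ)+1/2) ≤ 4 * Real.log (n.factorial) + 2 * Real.log n := by
  have hn0 : (0:ℝ) < n := by positivity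
  have hn30 : (30:ℝ) ≤ n := by exact_mod_cast hn
  have hS := stirling4 n (by omega)
  have hE := two_pi_log n hn30
  have hu0 : (0:ℝ) < (n:ℝ)+1/2 := by positivity
  have hlu : Real.log ((n:ℝ)+1/2) ≤ Real.log n + (1/2)/(n:ℝ) :=
    log_le_add n (1/2) hn0 (by linarith)
  have hl3 : Real.log ((n:ℝ)+1/2+3) ≤ Real.log n + (7/2)/(n:ℝ) := by
    have h := log_le_add n (7/2) hn0 (by linarith)
    have e : (n:ℝ) + 7/2 = (n:ℝ)+1/2 + 3 := by ring
    rwa [e] at h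
  have hl7 : Real.log ((n:ℝ)+1/2+7) ≤ Real.log n + (15/2)/(n:ℝ) := by
    have h := log_le_add n (15/2) hn0 (by linarith)
    have e : (n:ℝ) + 15/2 = (n:ℝ)+1/2 + 7 := by ring
    rwa [e] at h
  have hc : 2*((n:ℝ)+1/2)*Real.log cG ≤ -4*((n:ℝ)+1/2) := by
    have := mul_le_mul_of_nonneg_left log_cG_le (by positivity : (0:ℝ) ≤ 2*((n:ℝ)+1/2))
    nlinarith
  have eu : 2*(((n:ℝ)+1/2)*Real.log ((n:ℝ)+1/2)) ≤ (2*(n:ℝ)+1)*Real.log n + (2*(n:ℝ)+1)*((1/2)/(n:ℝ)) := by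
    have h := mul_le_mul_of_nonneg_left hlu (by positivity : (0:ℝ) ≤ 2*((n:ℝ)+1/2))
    nlinarith
  have e3 : ((n:ℝ)+1/2)*Real.log ((n:ℝ)+1/2+3) ≤ ((n:ℝ)+1/2)*Real.log n + ((n:ℝ)+1/2)*((7/2)/(n:ℝ)) := by
    have h := mul_le_mul_of_nonneg_left hl3 hu0.le
    nlinarith
  have e7 : ((n:ℝ)+1/2)*Real.log ((n:ℝ)+1/2+7) ≤ ((n:ℝ)+1/2)*Real.log n + ((n:ℝ)+1/2)*((15/2)/(n:ℝ)) := by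
    have h := mul_le_mul_of_nonneg_left hl7 hu0.le
    nlinarith
  -- the error terms: (2n+1)*(1/2/n) + (n+1/2)*(7/2/n) + (n+1/2)*(15/2/n) = 12*(n+1/2)/n = 12 + 6/n
  have herr : (2*(n:ℝ)+1)*((1/2)/(n:ℝ)) + ((n:ℝ)+1/2)*((7/2)/(n:ℝ)) + ((n:ℝ)+1/2)*((15/2)/(n:ℝ))
      = 12 + 6/(n:ℝ) := by
    field_simp
    ring
  have h6n : 6/(n:ℝ) ≤ 1/5 := by
    rw [div_le_iff₀ hn0]
    linarith
  unfold Gf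
  linarith [eu, e3, e7, hc, hS, hE, herr, h6n]

lemma condC_tail (n : ℕ) (hn : 30 ≤ n) :
    Gf ((n:ℝ)+1/2) ≤ 4 * Real.log ((n+1).factorial) - 2 * Real.log ((n:ℝ)+2) := by
  have hn0 : (0:ℝ) < n := by positivity
  have hn30 : (30:ℝ) ≤ n := by exact_mod_cast hn
  have hM0 : (0:ℝ) < (n:ℝ)+1 := by positivity
  have hS := stirling4 (n+1) (by omega)
  have hScast : 2*Real.log (2*π*((n:ℝ)+1)) + 4*((n:ℝ)+1)*Real.log ((n:ℝ)+1) - 4*((n:ℝ)+1)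
      ≤ 4 * Real.log ((n+1).factorial) := by
    have e : ((n+1:ℕ):ℝ) = (n:ℝ)+1 := by push_cast; ring
    rwa [e] at hS
  have hE := two_pi_log ((n:ℝ)+1) (by linarith)
  have hu0 : (0:ℝ) < (n:ℝ)+1/2 := by positivity
  have hlu : Real.log ((n:ℝ)+1/2) ≤ Real.log ((n:ℝ)+1) + (-(1/2))/((n:ℝ)+1) := by
    have h := log_le_add ((n:ℝ)+1) (-(1/2)) hM0 (by linarith)
    have e : (n:ℝ)+1 + -(1/2) = (n:ℝ)+1/2 := by ring
    rwa [e] at h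
  have hl3 : Real.log ((n:ℝ)+1/2+3) ≤ Real.log ((n:ℝ)+1) + (5/2)/((n:ℝ)+1) := by
    have h := log_le_add ((n:ℝ)+1) (5/2) hM0 (by linarith)
    have e : (n:ℝ)+1 + 5/2 = (n:ℝ)+1/2 + 3 := by ring
    rwa [e] at h
  have hl7 : Real.log ((n:ℝ)+1/2+7) ≤ Real.log ((n:ℝ)+1) + (13/2)/((n:ℝ)+1) := by
    have h := log_le_add ((n:ℝ)+1) (13/2) hM0 (by linarith)
    have e : (n:ℝ)+1 + 13/2 = (n:ℝ)+1/2 + 7 := by ring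
    rwa [e] at h
  have hlM1 : Real.log ((n:ℝ)+2) ≤ Real.log ((n:ℝ)+1) + 1/((n:ℝ)+1) := by
    have h := log_le_add ((n:ℝ)+1) 1 hM0 (by linarith)
    have e : (n:ℝ)+1 + 1 = (n:ℝ)+2 := by ring
    rwa [e] at h
  have hc : 2*((n:ℝ)+1/2)*Real.log cG ≤ -4*((n:ℝ)+1/2) := by
    have := mul_le_mul_of_nonneg_left log_cG_le (by positivity : (0:ℝ) ≤ 2*((n:ℝ)+1/2))
    nlinarith
  have eu : 2*(((n:ℝ)+1/2)*Real.log ((n:ℝ)+1/2)) ≤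
      (2*(n:ℝ)+1)*Real.log ((n:ℝ)+1) + (2*(n:ℝ)+1)*((-(1/2))/((n:ℝ)+1)) := by
    have h := mul_le_mul_of_nonneg_left hlu (by positivity : (0:ℝ) ≤ 2*((n:ℝ)+1/2))
    nlinarith
  have e3 : ((n:ℝ)+1/2)*Real.log ((n:ℝ)+1/2+3) ≤
      ((n:ℝ)+1/2)*Real.log ((n:ℝ)+1) + ((n:ℝ)+1/2)*((5/2)/((n:ℝ)+1)) := by
    have h := mul_le_mul_of_nonneg_left hl3 hu0.le
    nlinarith
  have e7 : ((n:ℝ)+1/2)*Real.log ((n:ℝ)+1/2+7) ≤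
      ((n:ℝ)+1/2)*Real.log ((n:ℝ)+1) + ((n:ℝ)+1/2)*((13/2)/((n:ℝ)+1)) := by
    have h := mul_le_mul_of_nonneg_left hl7 hu0.le
    nlinarith
  have herr : (2*(n:ℝ)+1)*((-(1/2))/((n:ℝ)+1)) + ((n:ℝ)+1/2)*((5/2)/((n:ℝ)+1))
      + ((n:ℝ)+1/2)*((13/2)/((n:ℝ)+1)) = 8*((n:ℝ)+1/2)/((n:ℝ)+1) := by
    field_simp
    ring
  have herr2 : 8*((n:ℝ)+1/2)/((n:ℝ)+1) ≤ 8 := by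
    rw [div_le_iff₀ hM0]
    linarith
  have h1M : 2*(1/((n:ℝ)+1)) ≤ 1/15 := by
    rw [mul_one_div, div_le_div_iff₀ hM0 (by norm_num)]
    linarith
  unfold Gf
  linarith [eu, e3, e7, hc, hScast, hE, herr, herr2, hlM1, h1M]

lemma condA (n : ℕ) (hn : 5 ≤ n) : Gf n ≤ 4 * Real.log (n.factorial) := by
  rcases le_or_gt n 29 with h29 | h30
  · apply redA n (by omega)
    interval_cases n <;> norm_num [Nat.factorial]
  · exact condA_tail n (by omega)

lemma condB (n : ℕ) (hn : 5 ≤ n) :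
    Gf ((n:ℝ)+1/2) ≤ 4 * Real.log (n.factorial) + 2 * Real.log n := by
  rcases le_or_gt n 29 with h29 | h30
  · apply redB n (by omega)
    interval_cases n <;> norm_num [Nat.factorial]
  · exact condB_tail n (by omega)

lemma condC (n : ℕ) (hn : 5 ≤ n) :
    Gf ((n:ℝ)+1/2) ≤ 4 * Real.log ((n+1).factorial) - 2 * Real.log ((n:ℝ)+2) := by
  rcases le_or_gt n 29 with h29 | h30
  · apply redC n (by omega)
    interval_cases n <;> norm_num [Nat.factorial]
  · exact condC_tail n (by omega)

lemma main_log (x : ℝ) (hx : 5 ≤ x) : Gf x ≤ 4 * Real.log (Real.Gamma (1+x)) := by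
  obtain ⟨n, hn5, hxn, hxn1⟩ : ∃ n:ℕ, 5 ≤ n ∧ (n:ℝ) ≤ x ∧ x < (n:ℝ)+1 := by
    refine ⟨⌊x⌋₊, Nat.le_floor (by exact_mod_cast hx), Nat.floor_le (by linarith), ?_⟩
    exact_mod_cast Nat.lt_floor_add_one x
  have hn0 : (0:ℝ) < n := by
    have : (5:ℝ) ≤ n := by exact_mod_cast hn5
    linarith
  rcases le_or_gt x ((n:ℝ)+1/2) with hhalf | hhalf
  · -- x ∈ [n, n+1/2]
    rcases eq_or_lt_of_le hxn with heq | hlt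
    · rw [← heq]
      have hΓ : Real.Gamma (1+(n:ℝ)) = (n.factorial : ℝ) := by
        rw [add_comm, Real.Gamma_nat_eq_factorial]
      rw [hΓ]
      exact condA n hn5
    · obtain ⟨s, hsdef⟩ : ∃ s:ℝ, s = 2*(x - n) := ⟨_, rfl⟩
      have hs0 : 0 ≤ s := by rw [hsdef]; linarith
      have hs1 : s ≤ 1 := by rw [hsdef]; linarith
      have hxrep : x = (1-s)*(n:ℝ) + s*((n:ℝ)+1/2) := by rw [hsdef]; ring
      have step1 : Gf x ≤ (1-s)*Gf n + s*Gf ((n:ℝ)+1/2) := by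
        rw [hxrep]
        exact Gf_chord hn0 (by linarith) hs0 hs1
      have step2 : (1-s)*Gf n + s*Gf ((n:ℝ)+1/2) ≤
          4*Real.log (n.factorial) + 4*(x-(n:ℝ))*Real.log n := by
        have hA := condA n hn5
        have hB := condB n hn5
        have h1 := mul_le_mul_of_nonneg_left hA (by linarith : (0:ℝ) ≤ 1-s)
        have h2 := mul_le_mul_of_nonneg_left hB hs0
        have e : (1-s)*(4*Real.log (n.factorial)) + s*(4*Real.log (n.factorial) + 2*Real.log n)
            = 4*Real.log (n.factorial) + 4*(x-(n:ℝ))*Real.log n := by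
          rw [hsdef]; ring
        linarith
      have step3 : 4*Real.log (n.factorial) + 4*(x-(n:ℝ))*Real.log n ≤
          4 * Real.log (Real.Gamma (1+x)) := by
        obtain ⟨m, rfl⟩ : ∃ m, n = m+1 := ⟨n-1, by omega⟩
        have hmx : (m:ℝ)+1 < x := by push_cast at hlt ⊢; linarith
        have h := secL m hmx
        have ec : ((m:ℝ)+1) = ((m+1:ℕ):ℝ) := by push_cast; ring
        rw [ec] at h
        nlinarith [h]
      linarith
  · -- x ∈ (n+1/2, n+1)
    obtain ⟨s, hsdef⟩ : ∃ s:ℝ, s = 2*(x - n) - 1 := ⟨_, rfl⟩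
    have hs0 : 0 ≤ s := by rw [hsdef]; linarith
    have hs1 : s ≤ 1 := by rw [hsdef]; linarith
    have hxrep : x = (1-s)*((n:ℝ)+1/2) + s*((n:ℝ)+1) := by rw [hsdef]; ring
    have step1 : Gf x ≤ (1-s)*Gf ((n:ℝ)+1/2) + s*Gf ((n:ℝ)+1) := by
      rw [hxrep]
      exact Gf_chord (by linarith) (by linarith) hs0 hs1
    have step2 : (1-s)*Gf ((n:ℝ)+1/2) + s*Gf ((n:ℝ)+1) ≤
        4*Real.log ((n+1).factorial) - 4*((n:ℝ)+1-x)*Real.log ((n:ℝ)+2) := by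
      have hC := condC n hn5
      have hA : Gf ((n:ℝ)+1) ≤ 4 * Real.log ((n+1).factorial) := by
        have := condA (n+1) (by omega)
        have e : ((n+1:ℕ):ℝ) = (n:ℝ)+1 := by push_cast; ring
        rwa [e] at this
      have h1 := mul_le_mul_of_nonneg_left hC (by linarith : (0:ℝ) ≤ 1-s)
      have h2 := mul_le_mul_of_nonneg_left hA hs0
      have e : (1-s)*(4*Real.log ((n+1).factorial) - 2*Real.log ((n:ℝ)+2))
          + s*(4*Real.log ((n+1).factorial))
          = 4*Real.log ((n+1).factorial) - 4*((n:ℝ)+1-x)*Real.log ((n:ℝ)+2) := by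
        rw [hsdef]; ring
      linarith
    have step3 : 4*Real.log ((n+1).factorial) - 4*((n:ℝ)+1-x)*Real.log ((n:ℝ)+2) ≤
        4 * Real.log (Real.Gamma (1+x)) := by
      have h := secR n (by linarith) hxn1
      nlinarith [h]
    linarith

/-- For every real number `x ≥ 5`,
`Γ(1+x)^(2/x) ≥ (2/(π√23)) · x · √((x+3)(x+7))`. -/
theorem gamma_lower_bound_one (x : ℝ) (hx : 5 ≤ x) :
    Real.Gamma (1 + x) ^ (2 / x) ≥
      (2 / (Real.pi * Real.sqrt 23)) * x * Real.sqrt ((x + 3) * (x + 7)) := by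
  have hx0 : (0:ℝ) < x := by linarith
  have hΓ : 0 < Real.Gamma (1+x) := Real.Gamma_pos_of_pos (by linarith)
  have hπ := Real.pi_pos
  have h3 : (0:ℝ) < x + 3 := by linarith
  have h7 : (0:ℝ) < x + 7 := by linarith
  have hP : (0:ℝ) < (x+3)*(x+7) := mul_pos h3 h7
  have hc := cG_pos
  have hR : 0 < (2 / (Real.pi * Real.sqrt 23)) * x * Real.sqrt ((x + 3) * (x + 7)) := by
    apply mul_pos (mul_pos _ hx0) (Real.sqrt_pos.2 hP)
    exact cG_pos
  rw [ge_iff_le, ← Real.exp_log hR, Real.rpow_def_of_pos hΓ]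
  apply Real.exp_le_exp.2
  have hm := main_log x hx
  have hsq : Real.sqrt ((x+3)*(x+7)) ≠ 0 := (Real.sqrt_pos.2 hP).ne'
  rw [show (2 / (Real.pi * Real.sqrt 23) : ℝ) = cG from rfl]
  rw [Real.log_mul (mul_pos cG_pos hx0).ne' hsq, Real.log_mul (ne_of_gt cG_pos) hx0.ne',
      Real.log_sqrt hP.le, Real.log_mul h3.ne' h7.ne']
  have hGf : Gf x = (Real.log cG + Real.log x + (Real.log (x+3) + Real.log (x+7))/2) * (2*x) := by
    unfold Gf
    ring
  have hrw : Real.log (Real.Gamma (1+x)) * (2/x) = (4*Real.log (Real.Gamma (1+x)))/(2*x) := by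
    field_simp
    ring
  rw [hrw, le_div_iff₀ (by linarith : (0:ℝ) < 2*x)]
  calc (Real.log cG + Real.log x + (Real.log (x+3) + Real.log (x+7))/2) * (2*x)
      = Gf x := hGf.symm
    _ ≤ 4*Real.log (Real.Gamma (1+x)) := hm
end

section
/- For every real number x ≥ 1, one has Γ(1+x)^{2/x} ≥ (1/e²)(x+1)(x+2), where Γ denotes the Euler Gamma function. -/
/-!
Taking logarithms, the claim is `log Γ(x + 1) ≥ x / 2 * log ((x + 1) * (x + 2)) - x`.
When `x` grows by one, the left side grows by exactly `log (x + 1)` and the right side by at most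
that much (this is `(1 + 1/y) (1 + 2/y)^y ≤ e²` for `y = x + 1 ≥ 2`), so it suffices to treat
`1 ≤ x ≤ 2`. There the tangent lines of the convex function `log ∘ Γ` at `2` and `3`, with slopes
`1 - γ` and `3/2 - γ`, already lie above the right side, using `1/2 < γ < 2/3`.
-/

open Real Set

theorem ConvexOn.add_mul_sub_le_of_hasDerivAt {S : Set ℝ} {f : ℝ → ℝ} {f' x y : ℝ}
    (hf : ConvexOn ℝ S f) (hx : x ∈ S) (hy : y ∈ S) (hd : HasDerivAt f f' x) :
    f x + f' * (y - x) ≤ f y := by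
  rcases lt_trichotomy x y with hxy | rfl | hyx
  · have h := hf.le_slope_of_hasDerivAt hx hy hxy hd
    rw [slope_def_field, le_div_iff₀ (sub_pos.2 hxy)] at h
    linarith
  · simp
  · have h := hf.slope_le_of_hasDerivAt hy hx hyx hd
    rw [slope_def_field, div_le_iff₀ (sub_pos.2 hyx)] at h
    linarith

namespace Real

theorem log_factorial_add_mul_sub_le_log_Gamma (n : ℕ) {t : ℝ} (ht : 0 < t) :
    log n.factorial + (harmonic n - eulerMascheroniConstant) * (t - (n + 1)) ≤
      log (Gamma t) := by
  have hfac : (0 : ℝ) < n.factorial := by positivity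
  have hd : HasDerivAt (log ∘ Gamma) (harmonic n - eulerMascheroniConstant) (n + 1) := by
    refine ((hasDerivAt_Gamma_nat n).log ?_).congr_deriv ?_ <;> rw [Gamma_nat_eq_factorial]
    · exact hfac.ne'
    · field_simp
      ring
  have h := convexOn_log_Gamma.add_mul_sub_le_of_hasDerivAt (mem_Ioi.2 (by positivity)) ht hd
  simpa only [Function.comp_apply, Gamma_nat_eq_factorial] using h

theorem log_one_add_le_sub_sq_div_four {t : ℝ} (h0 : 0 ≤ t) (h1 : t ≤ 1) :
    log (1 + t) ≤ t - t ^ 2 / 4 := by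
  have hs : 0 ≤ t - t ^ 2 / 4 := by nlinarith
  have hexp : 1 + t ≤ exp (t - t ^ 2 / 4) := by
    nlinarith [quadratic_le_exp_of_nonneg hs, mul_nonneg (sq_nonneg t) (sub_nonneg.2 h1)]
  simpa using log_le_log (by linarith) hexp

theorem log_three_le : log 3 ≤ 3 / 2 * log 2 + 1 / 16 := by
  have h : log (9 / 8) ≤ 9 / 8 - 1 := log_le_sub_one_of_pos (by norm_num)
  rw [show (9 / 8 : ℝ) = 3 ^ 2 / 2 ^ 3 by norm_num, log_div (by norm_num) (by norm_num),
    log_pow, log_pow] at h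
  push_cast at h
  linarith

end Real

noncomputable def logGammaMinorant (x : ℝ) : ℝ := x / 2 * log ((x + 1) * (x + 2)) - x

theorem logGammaMinorant_add_one_sub_le {x : ℝ} (hx : 1 ≤ x) :
    logGammaMinorant (x + 1) - logGammaMinorant x ≤ log (x + 1) := by
  set u := 1 / (x + 1) with hu
  have hx1 : 0 < x + 1 := by linarith
  have hu0 : 0 < u := by positivity
  have hu2 : 2 * u ≤ 1 := by rw [hu, mul_one_div, div_le_one hx1]; linarith
  have hux : (x + 1) * u = 1 := by rw [hu]; field_simp
  have hlog2 : log (x + 2) = log (x + 1) + log (1 + u) := by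
    rw [← log_mul hx1.ne' (by positivity)]; congr 1; linear_combination -hux
  have hlog3 : log (x + 3) = log (x + 1) + log (1 + 2 * u) := by
    rw [← log_mul hx1.ne' (by positivity)]; congr 1; linear_combination -2 * hux
  have ha : log (1 + u) ≤ u := by linarith [log_le_sub_one_of_pos (by positivity : 0 < 1 + u)]
  have hb := log_one_add_le_sub_sq_div_four (by positivity : 0 ≤ 2 * u) hu2
  unfold logGammaMinorant
  rw [show x + 1 + 1 = x + 2 by ring, show x + 1 + 2 = x + 3 by ring,
    log_mul (by linarith) (by linarith), log_mul (by linarith) (by linarith), hlog2, hlog3]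
  nlinarith [mul_le_mul_of_nonneg_left hb hx1.le]

theorem logGammaMinorant_le_of_nonneg {x : ℝ} (hx : 0 ≤ x) :
    logGammaMinorant x ≤ x * (log 3 + (x - 3 / 2) / 3) - x := by
  have hamgm : (x + 1) * (x + 2) ≤ (x + 3 / 2) ^ 2 := by nlinarith
  have htan : log ((x + 3 / 2) / 3) ≤ (x + 3 / 2) / 3 - 1 := log_le_sub_one_of_pos (by positivity)
  rw [log_div (by positivity) (by norm_num)] at htan
  have hlog : log ((x + 1) * (x + 2)) ≤ 2 * log (x + 3 / 2) := by
    have h := log_le_log (by positivity) hamgm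
    rwa [log_pow, Nat.cast_ofNat] at h
  unfold logGammaMinorant
  nlinarith

theorem logGammaMinorant_le_log_Gamma_of_mem_Icc {x : ℝ} (h1 : 1 ≤ x) (h2 : x ≤ 2) :
    logGammaMinorant x ≤ log (Gamma (x + 1)) := by
  have hγ₁ := one_half_lt_eulerMascheroniConstant
  have hγ₂ := eulerMascheroniConstant_lt_two_thirds
  have hl2 := log_two_gt_d9
  have hl2' := log_two_lt_d9
  have hl3 := log_three_le
  have hmin := logGammaMinorant_le_of_nonneg (by linarith : 0 ≤ x)
  have htan₁ := log_factorial_add_mul_sub_le_log_Gamma 1 (t := x + 1) (by linarith)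
  have htan₂ := log_factorial_add_mul_sub_le_log_Gamma 2 (t := x + 1) (by linarith)
  norm_num [harmonic] at htan₁ htan₂
  rcases le_total x (3 / 2) with hx | hx
  · nlinarith [mul_nonneg (sub_nonneg.2 h1) (sub_nonneg.2 hx)]
  · nlinarith [mul_nonneg (sub_nonneg.2 hx) (sub_nonneg.2 h2)]

theorem forall_ge_of_forall_mem_Icc_of_add_one {p : ℝ → Prop} {a : ℝ}
    (hbase : ∀ x ∈ Icc a (a + 1), p x) (hstep : ∀ x, a ≤ x → p x → p (x + 1)) :
    ∀ x, a ≤ x → p x := by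
  intro x hx
  set n := ⌊x - a⌋₊
  have hn : (n : ℝ) ≤ x - a := Nat.floor_le (by linarith)
  have hn' : x - a < n + 1 := Nat.lt_floor_add_one _
  have key : ∀ k : ℕ, k ≤ n → p (x - n + k) := by
    intro k
    induction k with
    | zero => intro _; simpa using hbase _ ⟨by linarith, by linarith⟩
    | succ k ih =>
      intro hk
      have hk' : (k : ℝ) + 1 ≤ n := by exact_mod_cast hk
      simpa [add_assoc] using hstep _ (by linarith) (ih (by omega))
  simpa using key n le_rfl

theorem logGammaMinorant_le_log_Gamma {x : ℝ} (hx : 1 ≤ x) :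
    logGammaMinorant x ≤ log (Gamma (x + 1)) := by
  refine forall_ge_of_forall_mem_Icc_of_add_one
    (fun y hy ↦ logGammaMinorant_le_log_Gamma_of_mem_Icc hy.1 (by linarith [hy.2]))
    (fun y hy h ↦ ?_) x hx
  rw [Gamma_add_one (by positivity), log_mul (by positivity) (Gamma_pos_of_pos (by positivity)).ne']
  linarith [logGammaMinorant_add_one_sub_le hy]

/-- For every real number `x ≥ 1`, `Γ(1+x)^(2/x) ≥ (1/e²)(x+1)(x+2)`. -/
theorem gamma_lower_bound_two (x : ℝ) (hx : 1 ≤ x) :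
    Real.Gamma (1 + x) ^ (2 / x) ≥ (1 / Real.exp 1 ^ 2) * (x + 1) * (x + 2) := by
  have hx0 : 0 < x := by linarith
  have hΓ : 0 < Gamma (x + 1) := Gamma_pos_of_pos (by linarith)
  rw [ge_iff_le, add_comm 1 x, ← log_le_log_iff (by positivity) (by positivity), log_rpow hΓ]
  have hlog : log (1 / exp 1 ^ 2 * (x + 1) * (x + 2)) = 2 / x * logGammaMinorant x := by
    rw [mul_assoc, log_mul (by positivity) (by positivity), one_div, log_inv, log_pow, log_exp,
      logGammaMinorant]
    field_simp
    ring
  rw [hlog]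
  exact mul_le_mul_of_nonneg_left (logGammaMinorant_le_log_Gamma hx) (by positivity)
end

section
/- Let g(x,y) = (y / Γ(1+y)^{1/y}) · (Γ(1+xy)^{1/y} / (y^x · Γ(1+x))) for x ≥ 1/2 and y ≥ 2. Then for every fixed y ≥ 2, the function x ↦ g(x,y) is non-increasing on [1/2, ∞); that is, for all 1/2 ≤ x₁ ≤ x₂ and y ≥ 2, g(x₂,y) ≤ g(x₁,y). -/
/-!
Taking logarithms, `g(x,y)` is a constant times `exp F(x)` with
`F(x) = log Γ(1+xy) / y - x log y - log Γ(1+x)`, so it suffices that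
`F'(x) = ψ(1+xy) - log y - ψ(1+x) ≤ 0`, where `ψ = Γ'/Γ`. Log-convexity of `Γ` gives
`ψ(s) ≤ log s`, and the lower bound `log (s - 1/2) ≤ ψ(s)` follows by iterating
`ψ(s+1) = ψ(s) + 1/s` against `1/t ≤ log (t + 1/2) - log (t - 1/2)` and letting the
shift tend to infinity. Then `ψ(1+xy) ≤ log (1+xy) ≤ log (y (x + 1/2)) ≤ log y + ψ(1+x)`,
the middle step being exactly `y ≥ 2`.
-/

/-- `g(x,y) = (y / Γ(1+y)^(1/y)) · (Γ(1+xy)^(1/y) / (yˣ · Γ(1+x)))`. -/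
noncomputable def g (x y : ℝ) : ℝ :=
  (y / Real.Gamma (1 + y) ^ (1 / y)) *
    (Real.Gamma (1 + x * y) ^ (1 / y) / (y ^ x * Real.Gamma (1 + x)))

open Real Set Filter Topology

noncomputable def digamma (s : ℝ) : ℝ := logDeriv Gamma s

lemma hasDerivAt_log_Gamma {s : ℝ} (hs : 0 < s) :
    HasDerivAt (fun t => log (Gamma t)) (digamma s) s :=
  (differentiableOn_Gamma_Ioi.differentiableAt (Ioi_mem_nhds hs)).hasDerivAt.log
    (Gamma_pos_of_pos hs).ne'

lemma log_Gamma_add_one {s : ℝ} (hs : 0 < s) :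
    log (Gamma (s + 1)) = log s + log (Gamma s) := by
  rw [Gamma_add_one hs.ne', log_mul hs.ne' (Gamma_pos_of_pos hs).ne']

lemma digamma_le_log {s : ℝ} (hs : 0 < s) : digamma s ≤ log s := by
  have h := convexOn_log_Gamma.le_slope_of_hasDerivAt (mem_Ioi.2 hs)
    (mem_Ioi.2 (by linarith : (0 : ℝ) < s + 1)) (lt_add_one s) (hasDerivAt_log_Gamma hs)
  rw [slope_def_field] at h
  simp only [Function.comp_apply, log_Gamma_add_one hs] at h
  convert h using 1
  ring

lemma log_sub_one_le_digamma {s : ℝ} (hs : 1 < s) : log (s - 1) ≤ digamma s := by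
  have hs₁ : 0 < s - 1 := by linarith
  have h := convexOn_log_Gamma.slope_le_of_hasDerivAt (mem_Ioi.2 hs₁)
    (mem_Ioi.2 (by linarith : (0 : ℝ) < s)) (by linarith : s - 1 < s)
    (hasDerivAt_log_Gamma (by linarith))
  have h_log : log (Gamma s) = log (s - 1) + log (Gamma (s - 1)) := by
    simpa using log_Gamma_add_one hs₁
  rw [slope_def_field] at h
  simp only [Function.comp_apply, h_log] at h
  convert h using 1
  ring

lemma digamma_add_one {s : ℝ} (hs : 0 < s) : digamma (s + 1) = digamma s + s⁻¹ := by
  have h_shift : HasDerivAt (fun t => log (Gamma (t + 1))) (digamma (s + 1)) s := by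
    have h := (hasDerivAt_log_Gamma (s := s + 1) (by linarith)).comp s
      ((hasDerivAt_id' s).add_const 1)
    rwa [mul_one] at h
  have h_sum : HasDerivAt (fun t => log t + log (Gamma t)) (s⁻¹ + digamma s) s :=
    (hasDerivAt_log hs.ne').add (hasDerivAt_log_Gamma hs)
  have h_eq : (fun t => log t + log (Gamma t)) =ᶠ[𝓝 s] fun t => log (Gamma (t + 1)) := by
    filter_upwards [eventually_gt_nhds hs] with t ht
    rw [log_Gamma_add_one ht]
  rw [(h_shift.congr_of_eventuallyEq h_eq).unique h_sum, add_comm]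

lemma digamma_add_nat {s : ℝ} (hs : 0 < s) (n : ℕ) :
    digamma (s + n) = digamma s + ∑ k ∈ Finset.range n, (s + k)⁻¹ := by
  induction n with
  | zero => simp
  | succ n ih =>
    rw [Nat.cast_succ, ← add_assoc, digamma_add_one (by positivity), ih, Finset.sum_range_succ,
      add_assoc]

lemma inv_le_log_add_half_sub_log_sub_half {t : ℝ} (ht : 1 / 2 < t) :
    t⁻¹ ≤ log (t + 1 / 2) - log (t - 1 / 2) := by
  have ha : 0 < t - 1 / 2 := by linarith
  have ht₀ : t ≠ 0 := by linarith
  have h := le_hasSum (hasSum_log_one_add_inv ha) 0 fun k _ => by positivity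
  have h_first : (2 : ℝ) * (1 / (2 * (0 : ℕ) + 1)) * (1 / (2 * (t - 1 / 2) + 1)) ^ (2 * 0 + 1)
      = t⁻¹ := by
    rw [show 2 * (t - 1 / 2) + 1 = 2 * t by ring]
    norm_num
    ring
  have h_log : 1 + (t - 1 / 2)⁻¹ = (t + 1 / 2) / (t - 1 / 2) := by
    rw [eq_div_iff ha.ne', add_mul, inv_mul_cancel₀ ha.ne']
    ring
  rwa [h_first, h_log, log_div (by linarith) ha.ne'] at h

lemma sum_inv_le_log_sub_log {s : ℝ} (hs : 1 / 2 < s) (n : ℕ) :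
    ∑ k ∈ Finset.range n, (s + k)⁻¹ ≤ log (s + n - 1 / 2) - log (s - 1 / 2) := by
  calc ∑ k ∈ Finset.range n, (s + k)⁻¹
      ≤ ∑ k ∈ Finset.range n, (log (s + (k + 1 : ℕ) - 1 / 2) - log (s + k - 1 / 2)) := by
        refine Finset.sum_le_sum fun k _ => ?_
        have h := inv_le_log_add_half_sub_log_sub_half (t := s + k)
          (by have := k.cast_nonneg (α := ℝ); linarith)
        rwa [show s + ((k + 1 : ℕ) : ℝ) - 1 / 2 = s + k + 1 / 2 by push_cast; ring]
    _ = log (s + n - 1 / 2) - log (s - 1 / 2) := by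
        rw [Finset.sum_range_sub (fun k : ℕ => log (s + k - 1 / 2))]
        simp

lemma log_sub_half_le_digamma {s : ℝ} (hs : 1 / 2 < s) : log (s - 1 / 2) ≤ digamma s := by
  have h_bound : ∀ n : ℕ, 1 ≤ n →
      log (s + n - 1) - log (s + n - 1 / 2) + log (s - 1 / 2) ≤ digamma s := by
    intro n hn
    have hn' : (1 : ℝ) ≤ n := by exact_mod_cast hn
    have h_shift := digamma_add_nat (by linarith) n
    have h_lower := log_sub_one_le_digamma (s := s + n) (by linarith)
    linarith [sum_inv_le_log_sub_log hs n]
  have h_arg : Tendsto (fun n : ℕ => s + n - 1 / 2) atTop atTop :=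
    tendsto_atTop_add_const_right _ _
      (tendsto_atTop_add_const_left _ s tendsto_natCast_atTop_atTop)
  have h_lim : Tendsto (fun n : ℕ => log (s + n - 1) - log (s + n - 1 / 2) + log (s - 1 / 2))
      atTop (𝓝 (0 + log (s - 1 / 2))) := by
    refine (((tendsto_log_comp_add_sub_log (-1 / 2)).comp h_arg).congr fun n => ?_).add_const _
    simp only [Function.comp_apply]
    ring_nf
  rw [zero_add] at h_lim
  exact le_of_tendsto h_lim (eventually_atTop.2 ⟨1, h_bound⟩)

noncomputable def logGammaRatio (y x : ℝ) : ℝ :=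
  log (Gamma (1 + x * y)) / y - x * log y - log (Gamma (1 + x))

lemma hasDerivAt_logGammaRatio {x y : ℝ} (hx : 0 ≤ x) (hy : 0 < y) :
    HasDerivAt (logGammaRatio y) (digamma (1 + x * y) - log y - digamma (1 + x)) x := by
  have h_inner : HasDerivAt (fun t => 1 + t * y) y x := (hasDerivAt_mul_const y).const_add 1
  have h_first :=
    ((hasDerivAt_log_Gamma (s := 1 + x * y) (by positivity)).comp x h_inner).div_const y
  have h_last := (hasDerivAt_log_Gamma (s := 1 + x) (by positivity)).comp x
    ((hasDerivAt_id' x).const_add 1)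
  have h := (h_first.sub (hasDerivAt_mul_const (log y))).sub h_last
  rwa [mul_div_cancel_right₀ _ hy.ne', mul_one] at h

lemma digamma_one_add_mul_le {x y : ℝ} (hx : 0 ≤ x) (hy : 2 ≤ y) :
    digamma (1 + x * y) ≤ log y + digamma (1 + x) :=
  calc digamma (1 + x * y) ≤ log (1 + x * y) := digamma_le_log (by positivity)
    _ ≤ log (y * (1 + x - 1 / 2)) := log_le_log (by positivity) (by nlinarith)
    _ = log y + log (1 + x - 1 / 2) := log_mul (by positivity) (by linarith)
    _ ≤ log y + digamma (1 + x) := by gcongr; exact log_sub_half_le_digamma (by linarith)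

lemma logGammaRatio_antitoneOn {y : ℝ} (hy : 2 ≤ y) : AntitoneOn (logGammaRatio y) (Ici 0) := by
  have h_deriv (x : ℝ) (hx : x ∈ Ici 0) := hasDerivAt_logGammaRatio hx (by linarith : 0 < y)
  refine antitoneOn_of_hasDerivWithinAt_nonpos (convex_Ici 0)
    (fun x hx => (h_deriv x hx).continuousAt.continuousWithinAt)
    (fun x hx => (h_deriv x (interior_subset hx)).hasDerivWithinAt) fun x hx => ?_
  have := digamma_one_add_mul_le (interior_subset hx : x ∈ Ici 0) hy
  linarith

lemma g_eq_mul_exp_logGammaRatio {x y : ℝ} (hx : 0 ≤ x) (hy : 0 < y) :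
    g x y = y / Gamma (1 + y) ^ (1 / y) * exp (logGammaRatio y x) := by
  have h_num : Gamma (1 + x * y) ^ (1 / y) = exp (log (Gamma (1 + x * y)) / y) := by
    rw [rpow_def_of_pos (Gamma_pos_of_pos (by positivity)), mul_one_div]
  rw [g, h_num, rpow_def_of_pos hy, ← exp_log (Gamma_pos_of_pos (by positivity : 0 < 1 + x)),
    ← exp_add, ← exp_sub, logGammaRatio]
  ring_nf

/-- For every fixed `y ≥ 2`, `x ↦ g(x,y)` is non-increasing on `[1/2, ∞)`. -/
theorem g_antitone_in_x (x₁ x₂ y : ℝ) (h₁ : 1 / 2 ≤ x₁) (h₁₂ : x₁ ≤ x₂) (hy : 2 ≤ y) :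
    g x₂ y ≤ g x₁ y := by
  have hx₁ : 0 ≤ x₁ := by linarith
  have hx₂ : 0 ≤ x₂ := hx₁.trans h₁₂
  have hy₀ : 0 < y := by linarith
  rw [g_eq_mul_exp_logGammaRatio hx₁ hy₀, g_eq_mul_exp_logGammaRatio hx₂ hy₀]
  gcongr
  exact logGammaRatio_antitoneOn hy hx₁ hx₂ h₁₂
end

section
/- Let g(x,y) = (y / Γ(1+y)^{1/y}) · (Γ(1+xy)^{1/y} / (y^x · Γ(1+x))) for x ≥ 1/2 and y ≥ 2. Then for every fixed x ≥ 1, the function y ↦ g(x,y) is non-increasing on [2, ∞); that is, for all x ≥ 1 and 2 ≤ y₁ ≤ y₂, g(x,y₂) ≤ g(x,y₁). -/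
open Real Filter Topology Finset
open scoped Nat

lemma ConcaveOn.of_tendsto {E ι : Type*} [AddCommMonoid E] [Module ℝ E] {l : Filter ι} [l.NeBot]
    {s : Set E} {F : ι → E → ℝ} {f : E → ℝ} (hs : Convex ℝ s) (hF : ∀ i, ConcaveOn ℝ s (F i))
    (hlim : ∀ x ∈ s, Tendsto (fun i => F i x) l (𝓝 (f x))) : ConcaveOn ℝ s f := by
  refine ⟨hs, fun a ha b hb wa wb hwa hwb hab => ?_⟩
  exact le_of_tendsto_of_tendsto' (((hlim a ha).const_smul wa).add ((hlim b hb).const_smul wb))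
    (hlim _ (hs ha hb hwa hwb hab)) fun i => (hF i).2 ha hb hwa hwb hab

lemma ConcaveOn.slope_le_slope {s : Set ℝ} {f : ℝ → ℝ} (hf : ConcaveOn ℝ s f) {a b c d : ℝ}
    (ha : a ∈ s) (hb : b ∈ s) (hc : c ∈ s) (hd : d ∈ s) (hab : a < b) (hcd : c < d)
    (hac : a ≤ c) (hbd : b ≤ d) : slope f c d ≤ slope f a b :=
  calc slope f c d = slope f d c := slope_comm f c d
    _ ≤ slope f d a := hf.slope_anti hd ⟨ha, (hab.trans_le hbd).ne⟩ ⟨hc, hcd.ne⟩ hac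
    _ = slope f a d := slope_comm f d a
    _ ≤ slope f a b := hf.slope_anti ha ⟨hb, hab.ne'⟩ ⟨hd, (hab.trans_le hbd).ne'⟩ hbd

lemma sum_range_inv_sq_le_inv_sub_inv {s : ℝ} (hs : 0 < s) (n : ℕ) :
    ∑ j ∈ range n, ((1 + s + j) ^ 2)⁻¹ ≤ s⁻¹ - (s + n)⁻¹ := by
  induction n with
  | zero => simp
  | succ n ih =>
    have step : ((1 + s + n) ^ 2)⁻¹ ≤ (s + n)⁻¹ - (s + (n + 1 : ℕ))⁻¹ := by
      have htel : (s + n)⁻¹ - (s + (n + 1 : ℕ))⁻¹ = ((s + n) * (1 + s + n))⁻¹ := by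
        push_cast
        field_simp
        ring
      rw [htel]
      exact inv_anti₀ (by positivity) (by nlinarith)
    rw [sum_range_succ]
    linarith

lemma sum_range_inv_sq_le_inv {s : ℝ} (hs : 0 < s) (n : ℕ) :
    ∑ j ∈ range n, ((1 + s + j) ^ 2)⁻¹ ≤ s⁻¹ :=
  (sum_range_inv_sq_le_inv_sub_inv hs n).trans (sub_le_self _ (by positivity))

noncomputable def stirlingCorrection (s : ℝ) : ℝ := log (Gamma (1 + s)) - s * log s + s

/-- `log (GammaSeq (1 + s) n) - s * log s + s`, expanded. -/
noncomputable def stirlingCorrectionApprox (n : ℕ) (s : ℝ) : ℝ :=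
  (1 + s) * log n + log (n ! : ℝ) - ∑ j ∈ range (n + 1), log (1 + s + j) - s * log s + s

lemma log_GammaSeq_one_add {s : ℝ} (hs : 0 < s) {n : ℕ} (hn : n ≠ 0) :
    log (GammaSeq (1 + s) n) =
      (1 + s) * log n + log (n ! : ℝ) - ∑ j ∈ range (n + 1), log (1 + s + j) := by
  have hterm : ∀ j ∈ range (n + 1), (1 + s + j : ℝ) ≠ 0 := fun j _ => by positivity
  rw [GammaSeq, log_div (by positivity) (prod_ne_zero_iff.mpr hterm),
    log_mul (by positivity) (by positivity), log_rpow (by positivity), log_prod hterm]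

lemma tendsto_stirlingCorrectionApprox {s : ℝ} (hs : 0 < s) :
    Tendsto (fun n => stirlingCorrectionApprox n s) atTop (𝓝 (stirlingCorrection s)) := by
  have hlog := (GammaSeq_tendsto_Gamma (1 + s)).log (Gamma_pos_of_pos (by positivity)).ne'
  refine ((hlog.sub_const (s * log s)).add_const s).congr' ?_
  filter_upwards [eventually_ne_atTop 0] with n hn
  rw [log_GammaSeq_one_add hs hn, stirlingCorrectionApprox]

lemma hasDerivAt_stirlingCorrectionApprox (n : ℕ) {s : ℝ} (hs : 0 < s) :
    HasDerivAt (stirlingCorrectionApprox n)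
      (log n - ∑ j ∈ range (n + 1), (1 + s + j)⁻¹ - log s) s := by
  have hsum : HasDerivAt (fun t => ∑ j ∈ range (n + 1), log (1 + t + j))
      (∑ j ∈ range (n + 1), (1 + s + j)⁻¹) s :=
    HasDerivAt.fun_sum fun j _ => by
      simpa using (((hasDerivAt_id s).const_add 1).add_const (j : ℝ)).log (by positivity)
  have hmul : HasDerivAt (fun t => t * log t) (log s + 1) s :=
    ((hasDerivAt_id' s).mul (hasDerivAt_log hs.ne')).congr_deriv (by simp [hs.ne'])
  have hlin : HasDerivAt (fun t => (1 + t) * log n) (log n) s := by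
    simpa using ((hasDerivAt_id s).const_add 1).mul_const (log n)
  exact ((((hlin.add_const _).sub hsum).sub hmul).add (hasDerivAt_id s)).congr_deriv (by ring)

lemma hasDerivAt_deriv_stirlingCorrectionApprox (n : ℕ) {s : ℝ} (hs : 0 < s) :
    HasDerivAt (fun t : ℝ => log n - ∑ j ∈ range (n + 1), (1 + t + j)⁻¹ - log t)
      (∑ j ∈ range (n + 1), ((1 + s + j) ^ 2)⁻¹ - s⁻¹) s := by
  have hsum : HasDerivAt (fun t : ℝ => ∑ j ∈ range (n + 1), (1 + t + j)⁻¹)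
      (∑ j ∈ range (n + 1), -((1 + s + j) ^ 2)⁻¹) s :=
    HasDerivAt.fun_sum fun j _ =>
      ((((hasDerivAt_id' s).const_add 1).add_const (j : ℝ)).inv (by positivity)).congr_deriv (by ring)
  exact (((hasDerivAt_const s (log n)).sub hsum).sub (hasDerivAt_log hs.ne')).congr_deriv (by
    rw [sum_neg_distrib]; ring)

lemma concaveOn_stirlingCorrectionApprox (n : ℕ) :
    ConcaveOn ℝ (Set.Ioi 0) (stirlingCorrectionApprox n) := by
  refine concaveOn_of_hasDerivWithinAt2_nonpos (convex_Ioi 0)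
    (f' := fun t => log n - ∑ j ∈ range (n + 1), (1 + t + j)⁻¹ - log t)
    (f'' := fun t => ∑ j ∈ range (n + 1), ((1 + t + j) ^ 2)⁻¹ - t⁻¹)
    (fun s hs => (hasDerivAt_stirlingCorrectionApprox n hs).continuousAt.continuousWithinAt)
    ?_ ?_ ?_ <;> rw [interior_Ioi] <;> intro s hs
  · exact (hasDerivAt_stirlingCorrectionApprox n hs).hasDerivWithinAt
  · exact (hasDerivAt_deriv_stirlingCorrectionApprox n hs).hasDerivWithinAt
  · exact sub_nonpos.mpr (sum_range_inv_sq_le_inv hs (n + 1))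

lemma concaveOn_stirlingCorrection : ConcaveOn ℝ (Set.Ioi 0) stirlingCorrection :=
  .of_tendsto (l := atTop) (convex_Ioi 0) concaveOn_stirlingCorrectionApprox
    fun _ hs => tendsto_stirlingCorrectionApprox hs

lemma div_eq_sub_one_mul_slope (f : ℝ → ℝ) (x y : ℝ) :
    (f (x * y) - f y) / y = (x - 1) * slope f y (x * y) := by
  rcases eq_or_ne x 1 with rfl | hx
  · simp
  rw [slope_def_field, ← sub_one_mul, ← mul_div_assoc, mul_div_mul_left _ _ (sub_ne_zero.mpr hx)]

lemma stirlingCorrection_chord_div_anti {x y₁ y₂ : ℝ} (hx : 1 ≤ x) (hy₁ : 0 < y₁)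
    (h₁₂ : y₁ ≤ y₂) :
    (stirlingCorrection (x * y₂) - stirlingCorrection y₂) / y₂ ≤
      (stirlingCorrection (x * y₁) - stirlingCorrection y₁) / y₁ := by
  have hy₂ : 0 < y₂ := hy₁.trans_le h₁₂
  rw [div_eq_sub_one_mul_slope, div_eq_sub_one_mul_slope]
  rcases hx.eq_or_lt with rfl | hx
  · simp
  refine mul_le_mul_of_nonneg_left ?_ (sub_nonneg.mpr hx.le)
  have hx₀ : 0 < x := one_pos.trans hx
  exact concaveOn_stirlingCorrection.slope_le_slope hy₁ (mul_pos hx₀ hy₁) hy₂ (mul_pos hx₀ hy₂)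
    (lt_mul_left hy₁ hx) (lt_mul_left hy₂ hx) h₁₂ (by gcongr)

lemma g_eq_exp {x y : ℝ} (hx : 0 < x) (hy : 0 < y) :
    g x y = exp ((stirlingCorrection (x * y) - stirlingCorrection y) / y +
      (x * log x - x + 1 - log (Gamma (1 + x)))) := by
  have hΓy : 0 < Gamma (1 + y) := Gamma_pos_of_pos (by positivity)
  have hΓx : 0 < Gamma (1 + x) := Gamma_pos_of_pos (by positivity)
  have hΓxy : 0 < Gamma (1 + x * y) := Gamma_pos_of_pos (by positivity)
  rw [← exp_log (show 0 < g x y by unfold g; positivity)]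
  congr 1
  rw [g, log_mul (by positivity) (by positivity), log_div hy.ne' (by positivity),
    log_div (by positivity) (by positivity), log_mul (by positivity) hΓx.ne',
    log_rpow hΓy, log_rpow hΓxy, log_rpow hy, stirlingCorrection, stirlingCorrection,
    log_mul hx.ne' hy.ne']
  field_simp
  ring

/-- For every fixed `x ≥ 1`, `y ↦ g(x,y)` is non-increasing on `[2, ∞)`. -/
theorem g_antitone_in_y (x y₁ y₂ : ℝ) (hx : 1 ≤ x) (h₁ : 2 ≤ y₁) (h₁₂ : y₁ ≤ y₂) :
    g x y₂ ≤ g x y₁ := by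
  have hy₁ : 0 < y₁ := by linarith
  rw [g_eq_exp (by linarith) (hy₁.trans_le h₁₂), g_eq_exp (by linarith) hy₁]
  exact exp_le_exp.mpr (add_le_add_left (stirlingCorrection_chord_div_anti hx hy₁ h₁₂) _)
end

section
/- Let g(x,y) = (y / Γ(1+y)^{1/y}) · (Γ(1+xy)^{1/y} / (y^x · Γ(1+x))) for x ≥ 1/2 and y ≥ 2. Then for every fixed x with 1/2 ≤ x ≤ 1, the function y ↦ g(x,y) is non-decreasing on [2, ∞); that is, for all 1/2 ≤ x ≤ 1 and 2 ≤ y₁ ≤ y₂, g(x,y₁) ≤ g(x,y₂). -/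
open Real Filter Finset Topology

lemma one_div_add_one_sub_one_div_add_one_le {a b : ℝ} (ha : 0 < a) (hab : a ≤ b) :
    1 / (a + 1) - 1 / (b + 1) ≤ (log (a + 1) - log a) - (log (b + 1) - log b) := by
  have hb : 0 < b := ha.trans_le hab
  have hlog : (log (a + 1) - log a) - (log (b + 1) - log b)
      = -log (a * (b + 1) / ((a + 1) * b)) := by
    rw [log_div (by positivity) (by positivity), log_mul (by positivity) (by positivity),
      log_mul (by positivity) (by positivity)]
    ring
  have hfrac : 1 / (a + 1) - 1 / (b + 1) ≤ 1 - a * (b + 1) / ((a + 1) * b) := by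
    rw [show 1 / (a + 1) - 1 / (b + 1) = (b - a) / ((a + 1) * (b + 1)) by field_simp; ring,
      show 1 - a * (b + 1) / ((a + 1) * b) = (b - a) / ((a + 1) * b) by field_simp; ring]
    gcongr
    linarith
  linarith [log_le_sub_one_of_pos (x := a * (b + 1) / ((a + 1) * b)) (by positivity)]

lemma sum_one_div_sub_one_div_le_log_sub_log {c d : ℝ} (hc : 0 < c) (hcd : c ≤ d) (m : ℕ) :
    ∑ k ∈ range m, (1 / (c + (k + 1)) - 1 / (d + (k + 1))) ≤ log d - log c := by
  set Ψ : ℕ → ℝ := fun k => log (d + k) - log (c + k)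
  have hstep (k : ℕ) : 1 / (c + (k + 1)) - 1 / (d + (k + 1)) ≤ Ψ k - Ψ (k + 1) := by
    have h := one_div_add_one_sub_one_div_add_one_le (a := c + k) (b := d + k)
      (by positivity) (by linarith)
    simp only [Ψ, Nat.cast_succ, ← add_assoc] at h ⊢
    linarith
  have hΨ : 0 ≤ Ψ m := sub_nonneg.2 (log_le_log (by positivity) (by linarith))
  calc ∑ k ∈ range m, (1 / (c + (k + 1)) - 1 / (d + (k + 1)))
      ≤ ∑ k ∈ range m, (Ψ k - Ψ (k + 1)) := sum_le_sum fun k _ => hstep k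
    _ = Ψ 0 - Ψ m := sum_range_sub' Ψ m
    _ ≤ log d - log c := by simp only [Ψ, Nat.cast_zero, add_zero] at hΨ ⊢; linarith

lemma intervalIntegrable_one_div_mul_add {a b y c : ℝ}
    (hpos : ∀ t ∈ Set.uIcc a b, 0 < t * y + c) :
    IntervalIntegrable (fun t => 1 / (t * y + c)) MeasureTheory.volume a b :=
  (continuousOn_const.div (by fun_prop) fun t ht => (hpos t ht).ne').intervalIntegrable

lemma integral_one_div_mul_add {a b y c : ℝ} (hy : y ≠ 0)
    (hpos : ∀ t ∈ Set.uIcc a b, 0 < t * y + c) :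
    ∫ t in a..b, 1 / (t * y + c) = (log (b * y + c) - log (a * y + c)) / y := by
  have hderiv : ∀ t ∈ Set.uIcc a b,
      HasDerivAt (fun u => log (u * y + c) / y) (1 / (t * y + c)) t := by
    intro t ht
    refine (((((hasDerivAt_id' t).mul_const y).add_const c).log (hpos t ht).ne').div_const
      y).congr_deriv ?_
    field_simp
  rw [intervalIntegral.integral_eq_sub_of_hasDerivAt hderiv
    (intervalIntegrable_one_div_mul_add hpos), sub_div]

lemma log_sub_log_div_eq_integral {x y : ℝ} (hx : 0 ≤ x) (hy : 0 < y) (k : ℕ) :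
    (log (1 + y + k) - log (1 + x * y + k)) / y = ∫ t in x..1, 1 / (t * y + (k + 1)) := by
  rw [integral_one_div_mul_add hy.ne' fun t ht => ?_]
  · ring_nf
  · have : 0 ≤ t := (le_min hx zero_le_one).trans ht.1
    positivity

lemma sum_log_sub_log_div_sub_le {x y₁ y₂ : ℝ} (hx : 0 < x) (hx1 : x ≤ 1)
    (hy₁ : 0 < y₁) (h₁₂ : y₁ ≤ y₂) (m : ℕ) :
    ∑ k ∈ range m, ((log (1 + y₁ + k) - log (1 + x * y₁ + k)) / y₁
        - (log (1 + y₂ + k) - log (1 + x * y₂ + k)) / y₂)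
      ≤ (1 - x) * (log y₂ - log y₁) := by
  have hy₂ : 0 < y₂ := hy₁.trans_le h₁₂
  have hpos {y : ℝ} (hy : 0 < y) (k : ℕ) : ∀ t ∈ Set.uIcc x 1, 0 < t * y + (k + 1) :=
    fun t ht => by
      have : 0 ≤ t := (le_min hx.le zero_le_one).trans ht.1
      positivity
  set f : ℕ → ℝ → ℝ := fun k t => 1 / (t * y₁ + (k + 1)) - 1 / (t * y₂ + (k + 1))
  have hint (k : ℕ) : IntervalIntegrable (f k) MeasureTheory.volume x 1 :=
    (intervalIntegrable_one_div_mul_add (hpos hy₁ k)).sub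
      (intervalIntegrable_one_div_mul_add (hpos hy₂ k))
  have hsum : IntervalIntegrable (fun t => ∑ k ∈ range m, f k t) MeasureTheory.volume x 1 := by
    simpa only [← Finset.sum_apply] using IntervalIntegrable.sum (range m) fun k _ => hint k
  calc _ = ∫ t in x..1, ∑ k ∈ range m, f k t := by
        rw [intervalIntegral.integral_finsetSum fun k _ => hint k]
        refine sum_congr rfl fun k _ => ?_
        rw [log_sub_log_div_eq_integral hx.le hy₁, log_sub_log_div_eq_integral hx.le hy₂,
          ← intervalIntegral.integral_sub (intervalIntegrable_one_div_mul_add (hpos hy₁ k))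
            (intervalIntegrable_one_div_mul_add (hpos hy₂ k))]
    _ ≤ ∫ _ in x..1, (log y₂ - log y₁) := by
        refine intervalIntegral.integral_mono_on hx1 hsum intervalIntegrable_const fun t ht => ?_
        have ht0 : 0 < t := hx.trans_le ht.1
        have h := sum_one_div_sub_one_div_le_log_sub_log (c := t * y₁) (d := t * y₂)
          (by positivity) (by gcongr) m
        rwa [log_mul ht0.ne' hy₂.ne', log_mul ht0.ne' hy₁.ne', add_sub_add_left_eq_sub] at h
    _ = (1 - x) * (log y₂ - log y₁) := by
        rw [intervalIntegral.integral_const, smul_eq_mul]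

section Exponent

open BohrMollerup

variable (x : ℝ)

noncomputable def gExponent (y : ℝ) : ℝ :=
  (1 - x) * log y + (log (Gamma (1 + x * y)) - log (Gamma (1 + y))) / y

noncomputable def gExponentSeq (y : ℝ) (n : ℕ) : ℝ :=
  (1 - x) * log y + (logGammaSeq (1 + x * y) n - logGammaSeq (1 + y) n) / y

variable {x}

lemma gExponentSeq_eq {y : ℝ} (hy : y ≠ 0) (n : ℕ) :
    gExponentSeq x y n = (1 - x) * log y + (x - 1) * log n
      + ∑ k ∈ range (n + 1), (log (1 + y + k) - log (1 + x * y + k)) / y := by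
  rw [gExponentSeq, logGammaSeq, logGammaSeq, ← sum_div, sum_sub_distrib]
  field_simp
  ring

lemma tendsto_gExponentSeq (hx : 0 ≤ x) {y : ℝ} (hy : 0 ≤ y) :
    Tendsto (gExponentSeq x y) atTop (𝓝 (gExponent x y)) :=
  tendsto_const_nhds.add
    (((tendsto_log_gamma (by positivity)).sub (tendsto_log_gamma (by positivity))).div_const y)

lemma gExponent_le_gExponent (hx : 0 < x) (hx1 : x ≤ 1) {y₁ y₂ : ℝ} (hy₁ : 0 < y₁)
    (h₁₂ : y₁ ≤ y₂) : gExponent x y₁ ≤ gExponent x y₂ := by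
  have hy₂ : 0 < y₂ := hy₁.trans_le h₁₂
  refine le_of_tendsto_of_tendsto' (tendsto_gExponentSeq hx.le hy₁.le)
    (tendsto_gExponentSeq hx.le hy₂.le) fun n => ?_
  have h := sum_log_sub_log_div_sub_le hx hx1 hy₁ h₁₂ (n + 1)
  rw [sum_sub_distrib] at h
  rw [gExponentSeq_eq hy₁.ne', gExponentSeq_eq hy₂.ne']
  linarith

lemma g_pos (hx : 0 ≤ x) {y : ℝ} (hy : 0 < y) : 0 < g x y := by
  have := Gamma_pos_of_pos (show 0 < 1 + y by positivity)
  have := Gamma_pos_of_pos (show 0 < 1 + x * y by positivity)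
  have := Gamma_pos_of_pos (show 0 < 1 + x by positivity)
  unfold g
  positivity

lemma log_g (hx : 0 ≤ x) {y : ℝ} (hy : 0 < y) :
    log (g x y) = gExponent x y - log (Gamma (1 + x)) := by
  have hΓy := Gamma_pos_of_pos (show 0 < 1 + y by positivity)
  have hΓxy := Gamma_pos_of_pos (show 0 < 1 + x * y by positivity)
  have hΓx := Gamma_pos_of_pos (show 0 < 1 + x by positivity)
  rw [g, log_mul (by positivity) (by positivity), log_div (by positivity) (by positivity),
    log_div (by positivity) (by positivity), log_mul (by positivity) (by positivity),
    log_rpow hΓy, log_rpow hΓxy, log_rpow hy, gExponent]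
  field_simp
  ring

end Exponent

/-- For every fixed `1/2 ≤ x ≤ 1`, `y ↦ g(x,y)` is non-decreasing on `[2, ∞)`. -/
theorem g_monotone_in_y (x y₁ y₂ : ℝ) (hx1 : 1 / 2 ≤ x) (hx2 : x ≤ 1)
    (h₁ : 2 ≤ y₁) (h₁₂ : y₁ ≤ y₂) :
    g x y₁ ≤ g x y₂ := by
  have hx : 0 < x := by linarith
  have hy₁ : 0 < y₁ := by linarith
  have hy₂ : 0 < y₂ := hy₁.trans_le h₁₂
  rw [← log_le_log_iff (g_pos hx.le hy₁) (g_pos hx.le hy₂), log_g hx.le hy₁,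
    log_g hx.le hy₂]
  linarith [gExponent_le_gExponent hx hx2 hy₁ h₁₂]
end

section
/- For every real number x ≥ 5/2, one has Γ(1+2x) · Γ(1+x/2)² ≥ 2^x · Γ(1+x)² · Γ(1+(2x−1)/2)^{2x/(2x−1)}, where Γ denotes the Euler Gamma function. -/
/-!
By the duplication formula, `Γ(1+2x) Γ(1+x/2) Γ((x+1)/2) = 2^x Γ(1+x)² Γ(x+1/2)`, so the inequality
is equivalent to `Γ(x+1/2)^(1/(2x-1)) Γ((x+1)/2) ≤ Γ(1+x/2)`. With `c = x/2 + 3/4`, and since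
`Γ(c - (2x-1)/4) = Γ(1) = 1`, this compares the slopes at `t = (2x-1)/4` and at `t = 1/4` of
`t ↦ log Γ(c+t) - log Γ(c-t)`. These slopes decrease in `t`: by Gauss's product formula the
function is the limit of `2t log n - ∑_{j ≤ n} (log (c+j+t) - log (c+j-t))`, and each
`t ↦ log (m+t) - log (m-t)` is convex on `[0, m)` and vanishes at `0`.
-/

open Real Set Filter Topology

lemma hasDerivAt_log_add_sub_log_sub {m t : ℝ} (hpos : 0 < m + t) (hneg : 0 < m - t) :
    HasDerivAt (fun t => log (m + t) - log (m - t)) ((m + t)⁻¹ + (m - t)⁻¹) t := by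
  have hadd := ((hasDerivAt_id t).const_add m).log hpos.ne'
  have hsub := ((hasDerivAt_id t).const_sub m).log hneg.ne'
  refine (hadd.sub hsub).congr_deriv ?_
  simp only [id]
  ring

lemma inv_add_add_inv_sub_le {m s t : ℝ} (hs : 0 ≤ s) (hst : s ≤ t) (ht : t < m) :
    (m + s)⁻¹ + (m - s)⁻¹ ≤ (m + t)⁻¹ + (m - t)⁻¹ := by
  have hinv : ∀ u, 0 ≤ u → u < m → (m + u)⁻¹ + (m - u)⁻¹ = 2 * m / ((m + u) * (m - u)) := by
    intro u hu hum
    field_simp [show m + u ≠ 0 by linarith, show m - u ≠ 0 by linarith]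
    ring
  rw [hinv s hs (hst.trans_lt ht), hinv t (hs.trans hst) ht]
  exact div_le_div_of_nonneg_left (by linarith) (by nlinarith) (by nlinarith)

lemma convexOn_log_add_sub_log_sub (m : ℝ) :
    ConvexOn ℝ (Ico 0 m) (fun t => log (m + t) - log (m - t)) := by
  have hderiv : ∀ t ∈ Ioo 0 m, HasDerivAt (fun t => log (m + t) - log (m - t))
      ((m + t)⁻¹ + (m - t)⁻¹) t :=
    fun t ht => hasDerivAt_log_add_sub_log_sub (by linarith [ht.1, ht.2]) (by linarith [ht.2])
  refine MonotoneOn.convexOn_of_deriv (convex_Ico 0 m) ?_ ?_ ?_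
  · refine ContinuousOn.sub ?_ ?_ <;> refine ContinuousOn.log (by fun_prop) fun t ht => ?_
    · linarith [ht.1, ht.2]
    · linarith [ht.2]
  · rw [interior_Ico]
    exact fun t ht => (hderiv t ht).differentiableAt.differentiableWithinAt
  · rw [interior_Ico]
    intro s hs t ht hst
    rw [(hderiv s hs).deriv, (hderiv t ht).deriv]
    exact inv_add_add_inv_sub_le hs.1.le hst ht.2

lemma monotoneOn_log_add_sub_log_sub_div (m : ℝ) :
    MonotoneOn (fun t => (log (m + t) - log (m - t)) / t) (Ioo 0 m) := by
  intro s hs t ht hst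
  have h0 : (0 : ℝ) ∈ Ico 0 m := ⟨le_rfl, hs.1.trans hs.2⟩
  simpa using (convexOn_log_add_sub_log_sub m).secant_mono h0 (Ioo_subset_Ico_self hs)
    (Ioo_subset_Ico_self ht) hs.1.ne' ht.1.ne' hst

open Real.BohrMollerup in
lemma logGammaSeq_add_sub_logGammaSeq_sub (c t : ℝ) (n : ℕ) :
    logGammaSeq (c + t) n - logGammaSeq (c - t) n =
      2 * t * log n - ∑ j ∈ Finset.range (n + 1), (log (c + j + t) - log (c + j - t)) := by
  simp only [logGammaSeq, Finset.sum_sub_distrib, add_right_comm c t, sub_add_eq_add_sub]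
  ring

open Real.BohrMollerup in
lemma antitoneOn_logGammaSeq_add_sub_logGammaSeq_sub_div (c : ℝ) (n : ℕ) :
    AntitoneOn (fun t => (logGammaSeq (c + t) n - logGammaSeq (c - t) n) / t) (Ioo 0 c) := by
  have hexpand : ∀ t ≠ 0, (logGammaSeq (c + t) n - logGammaSeq (c - t) n) / t =
      2 * log n - ∑ j ∈ Finset.range (n + 1), (log (c + j + t) - log (c + j - t)) / t := by
    intro t ht
    rw [logGammaSeq_add_sub_logGammaSeq_sub, sub_div, Finset.sum_div]
    field_simp
  intro s hs t ht hst
  simp only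
  rw [hexpand s hs.1.ne', hexpand t ht.1.ne']
  refine sub_le_sub_left (Finset.sum_le_sum fun j _ => ?_) _
  have hc : c ≤ c + j := le_add_of_nonneg_right j.cast_nonneg
  exact monotoneOn_log_add_sub_log_sub_div (c + j) ⟨hs.1, hs.2.trans_le hc⟩
    ⟨ht.1, ht.2.trans_le hc⟩ hst

lemma antitoneOn_log_Gamma_add_sub_log_Gamma_sub_div (c : ℝ) :
    AntitoneOn (fun t => (log (Gamma (c + t)) - log (Gamma (c - t))) / t) (Ioo 0 c) := by
  intro s hs t ht hst
  have hlim : ∀ u ∈ Ioo 0 c, Tendsto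
      (fun n => (BohrMollerup.logGammaSeq (c + u) n - BohrMollerup.logGammaSeq (c - u) n) / u)
      atTop (𝓝 ((log (Gamma (c + u)) - log (Gamma (c - u))) / u)) := fun u hu =>
    ((BohrMollerup.tendsto_log_gamma (by linarith [hu.1, hu.2])).sub
      (BohrMollerup.tendsto_log_gamma (by linarith [hu.2]))).div_const u
  exact le_of_tendsto_of_tendsto' (hlim t ht) (hlim s hs) fun n =>
    antitoneOn_logGammaSeq_add_sub_logGammaSeq_sub_div c n hs ht hst

lemma Gamma_half_add_half_mul_Gamma_half_add_one (y : ℝ) :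
    Gamma (y / 2 + 1 / 2) * Gamma (y / 2 + 1) = 2 ^ (-y) * √π * Gamma (y + 1) := by
  have h := Gamma_mul_Gamma_add_half (y / 2 + 1 / 2)
  rw [show y / 2 + 1 / 2 + 1 / 2 = y / 2 + 1 by ring, show 2 * (y / 2 + 1 / 2) = y + 1 by ring,
    show 1 - (y + 1) = -y by ring] at h
  rw [h]
  ring

lemma two_rpow_mul_Gamma_sq_mul_Gamma_add_half (x : ℝ) :
    2 ^ x * Gamma (x + 1) ^ 2 * Gamma (x + 1 / 2) =
      Gamma (2 * x + 1) * Gamma (x / 2 + 1) * Gamma (x / 2 + 1 / 2) := by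
  have hx := Gamma_half_add_half_mul_Gamma_half_add_one x
  have h2x := Gamma_half_add_half_mul_Gamma_half_add_one (2 * x)
  rw [show 2 * x / 2 = x by ring] at h2x
  have hpow : (2 : ℝ) ^ x * 2 ^ (-(2 * x)) = 2 ^ (-x) := by
    rw [← rpow_add two_pos]; ring_nf
  calc 2 ^ x * Gamma (x + 1) ^ 2 * Gamma (x + 1 / 2)
      = 2 ^ x * Gamma (x + 1) * (Gamma (x + 1 / 2) * Gamma (x + 1)) := by ring
    _ = Gamma (2 * x + 1) * (Gamma (x / 2 + 1 / 2) * Gamma (x / 2 + 1)) := by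
      rw [h2x, hx, ← hpow]; ring
    _ = _ := by ring

lemma Gamma_add_half_rpow_mul_Gamma_half_add_half_le {x : ℝ} (hx : 1 ≤ x) :
    Gamma (x + 1 / 2) ^ (1 / (2 * x - 1)) * Gamma (x / 2 + 1 / 2) ≤ Gamma (x / 2 + 1) := by
  have hslope : (log (Gamma (x + 1 / 2)) - log (Gamma 1)) / ((2 * x - 1) / 4) ≤
      (log (Gamma (x / 2 + 1)) - log (Gamma (x / 2 + 1 / 2))) / (1 / 4) := by
    have := antitoneOn_log_Gamma_add_sub_log_Gamma_sub_div (x / 2 + 3 / 4)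
      (a := 1 / 4) (b := (2 * x - 1) / 4) ⟨by norm_num, by linarith⟩ ⟨by linarith, by linarith⟩
      (by linarith)
    simp only at this
    rwa [show x / 2 + 3 / 4 + (2 * x - 1) / 4 = x + 1 / 2 by ring,
      show x / 2 + 3 / 4 - (2 * x - 1) / 4 = 1 by ring,
      show x / 2 + 3 / 4 + 1 / 4 = x / 2 + 1 by ring,
      show x / 2 + 3 / 4 - 1 / 4 = x / 2 + 1 / 2 by ring] at this
  have hG : 0 < Gamma (x + 1 / 2) := Gamma_pos_of_pos (by linarith)
  have hG' : 0 < Gamma (x / 2 + 1 / 2) := Gamma_pos_of_pos (by linarith)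
  have h2x : 0 < 2 * x - 1 := by linarith
  rw [← log_le_log_iff (by positivity) (Gamma_pos_of_pos (by linarith)), log_mul (by positivity)
    hG'.ne', log_rpow hG]
  rw [Gamma_one, log_one, sub_zero, div_le_div_iff₀ (by positivity) (by norm_num)] at hslope
  rw [← le_sub_iff_add_le, one_div_mul_eq_div, div_le_iff₀ h2x]
  linarith

/-- For every real number `x ≥ 5/2`,
`Γ(1+2x) · Γ(1+x/2)² ≥ 2ˣ · Γ(1+x)² · Γ(1+(2x−1)/2)^(2x/(2x−1))`. -/
theorem gamma_four_ineq (x : ℝ) (hx : 5 / 2 ≤ x) :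
    Real.Gamma (1 + 2 * x) * Real.Gamma (1 + x / 2) ^ 2 ≥
      (2 : ℝ) ^ x * Real.Gamma (1 + x) ^ 2 *
        Real.Gamma (1 + (2 * x - 1) / 2) ^ (2 * x / (2 * x - 1)) := by
  have hG : 0 < Gamma (x + 1 / 2) := Gamma_pos_of_pos (by linarith)
  have h2x : 2 * x - 1 ≠ 0 := by linarith
  have hsplit : Gamma (x + 1 / 2) ^ (2 * x / (2 * x - 1)) =
      Gamma (x + 1 / 2) * Gamma (x + 1 / 2) ^ (1 / (2 * x - 1)) := by
    rw [show 2 * x / (2 * x - 1) = 1 + 1 / (2 * x - 1) by field_simp; ring,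
      rpow_add hG, rpow_one]
  rw [show 1 + (2 * x - 1) / 2 = x + 1 / 2 by ring, add_comm 1 (2 * x), add_comm 1 (x / 2),
    add_comm 1 x, hsplit, ge_iff_le]
  have hpos : 0 ≤ Gamma (2 * x + 1) * Gamma (x / 2 + 1) :=
    (mul_pos (Gamma_pos_of_pos (by linarith)) (Gamma_pos_of_pos (by linarith))).le
  calc 2 ^ x * Gamma (x + 1) ^ 2 * (Gamma (x + 1 / 2) * Gamma (x + 1 / 2) ^ (1 / (2 * x - 1)))
      = 2 ^ x * Gamma (x + 1) ^ 2 * Gamma (x + 1 / 2) * Gamma (x + 1 / 2) ^ (1 / (2 * x - 1)) := by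
        ring
    _ = Gamma (2 * x + 1) * Gamma (x / 2 + 1) *
          (Gamma (x + 1 / 2) ^ (1 / (2 * x - 1)) * Gamma (x / 2 + 1 / 2)) := by
        rw [two_rpow_mul_Gamma_sq_mul_Gamma_add_half]; ring
    _ ≤ Gamma (2 * x + 1) * Gamma (x / 2 + 1) * Gamma (x / 2 + 1) := by
        gcongr
        exact Gamma_add_half_rpow_mul_Gamma_half_add_half_le (by linarith)
    _ = Gamma (2 * x + 1) * Gamma (x / 2 + 1) ^ 2 := by ring
end

section
/- For every integer n ≥ 2, one has Γ(1+2n) · Γ(1+n/2)² ≥ 2^n · Γ(1+n)² · Γ(1+(2n−1)/2)^{2n/(2n−1)}, where Γ denotes the Euler Gamma function. -/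
/-!
By the duplication formula, `Γ(1+2n) = 4ⁿ Γ(n+1/2) Γ(n+1) / √π` and
`Γ(1+n) = 2ⁿ Γ(n/2+1/2) Γ(n/2+1) / √π`, so the inequality reduces to
`Γ(n+1/2) ≤ (Γ(n/2+1) / Γ(n/2+1/2))^(2n-1)`.
Log-convexity of `Γ` between `y` and `y+1` gives `y Γ(y+1/2)² ≤ Γ(y+1)²`. At `y = n/2` this bounds
the right-hand side below by `(n/2)^(n-1/2)`; at `y = n`, together with the elementary bound
`(2ⁿ n!)² ≤ 2 n²ⁿ` for `n ≥ 5`, it bounds the left-hand side above by the same quantity.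
The cases `n = 2, 3, 4` are checked from the half-integer values of `Γ`.
-/

open Real

theorem Nat.two_mul_pow_le_add_one_pow {n : ℕ} (hn : n ≠ 0) : 2 * n ^ n ≤ (n + 1) ^ n := by
  have hn' : (0 : ℝ) < n := by positivity
  have h := one_add_mul_le_pow (show (-2 : ℝ) ≤ 1 / n by linarith [one_div_pos.mpr hn']) n
  rw [mul_one_div_cancel hn'.ne', one_add_one_eq_two, one_add_div hn'.ne', div_pow,
    le_div_iff₀ (by positivity)] at h
  exact_mod_cast h

open Nat in
theorem Nat.sq_two_pow_mul_factorial_le {n : ℕ} (hn : 5 ≤ n) :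
    (2 ^ n * n !) ^ 2 ≤ 2 * (n ^ n) ^ 2 := by
  induction n, hn using Nat.le_induction with
  | base => norm_num [Nat.factorial]
  | succ n hn ih =>
    have hpow := two_mul_pow_le_add_one_pow (show n ≠ 0 by omega)
    calc (2 ^ (n + 1) * (n + 1)!) ^ 2 = 4 * (n + 1) ^ 2 * (2 ^ n * n !) ^ 2 := by
          rw [factorial_succ]; ring
      _ ≤ 4 * (n + 1) ^ 2 * (2 * (n ^ n) ^ 2) := by gcongr
      _ = 2 * (n + 1) ^ 2 * (2 * n ^ n) ^ 2 := by ring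
      _ ≤ 2 * (n + 1) ^ 2 * ((n + 1) ^ n) ^ 2 := by gcongr
      _ = 2 * ((n + 1) ^ (n + 1)) ^ 2 := by ring

namespace Real

theorem mul_Gamma_add_half_sq_le_Gamma_add_one_sq {y : ℝ} (hy : 0 < y) :
    y * Gamma (y + 1 / 2) ^ 2 ≤ Gamma (y + 1) ^ 2 := by
  have hconv := Gamma_mul_add_mul_le_rpow_Gamma_mul_rpow_Gamma hy (by linarith : 0 < y + 1)
    (by norm_num : (0 : ℝ) < 1 / 2) (by norm_num : (0 : ℝ) < 1 / 2) (by norm_num)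
  rw [show 1 / 2 * y + 1 / 2 * (y + 1) = y + 1 / 2 by ring, ← sqrt_eq_rpow, ← sqrt_eq_rpow]
    at hconv
  have hsq := pow_le_pow_left₀ (Gamma_pos_of_pos (by linarith)).le hconv 2
  rw [mul_pow, sq_sqrt (Gamma_pos_of_pos hy).le, sq_sqrt (Gamma_pos_of_pos (by linarith)).le]
    at hsq
  calc y * Gamma (y + 1 / 2) ^ 2 ≤ y * (Gamma y * Gamma (y + 1)) := by gcongr
    _ = Gamma (y + 1) ^ 2 := by rw [Gamma_add_one hy.ne']; ring

theorem Gamma_nat_add_half_sq_le {n : ℕ} (hn : 5 ≤ n) :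
    Gamma (n + 1 / 2) ^ 2 ≤ ((n : ℝ) / 2) ^ (2 * n - 1) := by
  have hn' : (0 : ℝ) < n := by positivity
  have hconv := mul_Gamma_add_half_sq_le_Gamma_add_one_sq hn'
  have hfact : ((2 ^ n * n.factorial) ^ 2 : ℝ) ≤ 2 * (n ^ n) ^ 2 := by
    exact_mod_cast Nat.sq_two_pow_mul_factorial_le hn
  rw [Gamma_nat_eq_factorial] at hconv
  have hsplit : ((n : ℝ) / 2) ^ (2 * n) = (n / 2) ^ (2 * n - 1) * (n / 2) := by
    rw [← pow_succ, Nat.sub_add_cancel (by omega)]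
  have hbound : (n : ℝ) * Gamma (n + 1 / 2) ^ 2 ≤ n * ((n : ℝ) / 2) ^ (2 * n - 1) := by
    calc (n : ℝ) * Gamma (n + 1 / 2) ^ 2 ≤ (n.factorial : ℝ) ^ 2 := hconv
      _ = (2 ^ n * n.factorial) ^ 2 / (2 ^ n) ^ 2 := by field_simp
      _ ≤ 2 * (n ^ n) ^ 2 / (2 ^ n) ^ 2 := by gcongr
      _ = 2 * ((n : ℝ) / 2) ^ (2 * n) := by rw [pow_mul', div_pow]; ring
      _ = n * ((n : ℝ) / 2) ^ (2 * n - 1) := by rw [hsplit]; ring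
  exact le_of_mul_le_mul_left hbound hn'

theorem Gamma_nat_add_half_mul_pow_le_of_five_le {n : ℕ} (hn : 5 ≤ n) :
    Gamma (n + 1 / 2) * Gamma (n / 2 + 1 / 2) ^ (2 * n - 1) ≤ Gamma (n / 2 + 1) ^ (2 * n - 1) := by
  have hy : (0 : ℝ) < n / 2 := by positivity
  have hratio := mul_Gamma_add_half_sq_le_Gamma_add_one_sq hy
  have hsq : (Gamma (n + 1 / 2) * Gamma (n / 2 + 1 / 2) ^ (2 * n - 1)) ^ 2 ≤
      (Gamma (n / 2 + 1) ^ (2 * n - 1)) ^ 2 := by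
    calc (Gamma (n + 1 / 2) * Gamma (n / 2 + 1 / 2) ^ (2 * n - 1)) ^ 2
        = Gamma (n + 1 / 2) ^ 2 * (Gamma (n / 2 + 1 / 2) ^ 2) ^ (2 * n - 1) := by ring
      _ ≤ ((n : ℝ) / 2) ^ (2 * n - 1) * (Gamma (n / 2 + 1 / 2) ^ 2) ^ (2 * n - 1) := by
          gcongr; exact Gamma_nat_add_half_sq_le hn
      _ = (n / 2 * Gamma (n / 2 + 1 / 2) ^ 2) ^ (2 * n - 1) := by rw [mul_pow]
      _ ≤ (Gamma (n / 2 + 1) ^ 2) ^ (2 * n - 1) := by gcongr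
      _ = (Gamma (n / 2 + 1) ^ (2 * n - 1)) ^ 2 := by ring
  exact (pow_le_pow_iff_left₀ (by positivity) (by positivity) two_ne_zero).mp hsq

theorem Gamma_nat_add_half_mul_pow_le_of_lt_five {n : ℕ} (hn : 2 ≤ n) (hn5 : n < 5) :
    Gamma (n + 1 / 2) * Gamma (n / 2 + 1 / 2) ^ (2 * n - 1) ≤ Gamma (n / 2 + 1) ^ (2 * n - 1) := by
  have h32 : Gamma (3 / 2) = √π / 2 := by
    convert Gamma_nat_add_half 1 using 1 <;> norm_num [Nat.doubleFactorial]
  have h52 : Gamma (5 / 2) = 3 * √π / 4 := by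
    convert Gamma_nat_add_half 2 using 1 <;> norm_num [Nat.doubleFactorial]
  have h72 : Gamma (7 / 2) = 15 * √π / 8 := by
    convert Gamma_nat_add_half 3 using 1 <;> norm_num [Nat.doubleFactorial]
  have h92 : Gamma (9 / 2) = 105 * √π / 16 := by
    convert Gamma_nat_add_half 4 using 1 <;> norm_num [Nat.doubleFactorial]
  have hs : √π ^ 2 = π := sq_sqrt pi_pos.le
  have hs0 : 0 < √π := sqrt_pos.mpr pi_pos
  set s := √π
  interval_cases n <;> norm_num [h32, h52, h72, h92]
  · nlinarith [pi_lt_d2, pi_pos]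
  · have h : (3 * s / 4) ^ 5 = 243 / 1024 * π ^ 2 * s := by rw [← hs]; ring
    have hπ : 15 / 8 ≤ 243 / 1024 * π ^ 2 := by nlinarith [pi_gt_three]
    rw [h]
    nlinarith
  · have h : 105 * s / 16 * (3 * s / 4) ^ 7 = 229635 / 262144 * (π ^ 2) ^ 2 := by
      rw [← hs]; ring
    rw [h]
    nlinarith [pow_le_pow_left₀ pi_pos.le pi_lt_d2.le 2, pi_lt_d2, pi_pos]

theorem Gamma_nat_add_half_mul_pow_le {n : ℕ} (hn : 2 ≤ n) :
    Gamma (n + 1 / 2) * Gamma (n / 2 + 1 / 2) ^ (2 * n - 1) ≤ Gamma (n / 2 + 1) ^ (2 * n - 1) := by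
  rcases lt_or_ge n 5 with hn5 | hn5
  · exact Gamma_nat_add_half_mul_pow_le_of_lt_five hn hn5
  · exact Gamma_nat_add_half_mul_pow_le_of_five_le hn5

theorem gamma_four_ineq_of_Gamma_add_half_mul_rpow_le {x : ℝ} (hx : 1 / 2 < x)
    (hkey : Gamma (x + 1 / 2) * Gamma (x / 2 + 1 / 2) ^ (2 * x - 1) ≤
      Gamma (x / 2 + 1) ^ (2 * x - 1)) :
    Gamma (1 + 2 * x) * Gamma (1 + x / 2) ^ 2 ≥
      2 ^ x * Gamma (1 + x) ^ 2 * Gamma (1 + (2 * x - 1) / 2) ^ (2 * x / (2 * x - 1)) := by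
  have hdup₁ := Gamma_mul_Gamma_add_half (x + 1 / 2)
  rw [show x + 1 / 2 + 1 / 2 = x + 1 by ring, show 2 * (x + 1 / 2) = 2 * x + 1 by ring,
    show 1 - (2 * x + 1) = -(2 * x) by ring] at hdup₁
  have hdup₂ := Gamma_mul_Gamma_add_half (x / 2 + 1 / 2)
  rw [show x / 2 + 1 / 2 + 1 / 2 = x / 2 + 1 by ring, show 2 * (x / 2 + 1 / 2) = x + 1 by ring,
    show 1 - (x + 1) = -x by ring] at hdup₂
  rw [ge_iff_le, show 1 + 2 * x = 2 * x + 1 by ring, add_comm 1 (x / 2), add_comm 1 x,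
    show 1 + (2 * x - 1) / 2 = x + 1 / 2 by ring]
  set A := Gamma (x + 1 / 2)
  set B := Gamma (x / 2 + 1 / 2)
  set C := Gamma (x / 2 + 1)
  have hA : 0 < A := Gamma_pos_of_pos (by linarith)
  have hB : 0 < B := Gamma_pos_of_pos (by linarith)
  have hC : 0 < C := Gamma_pos_of_pos (by linarith)
  have hm : 0 < 2 * x - 1 := by linarith
  have hroot : A ^ (2 * x - 1)⁻¹ * B ≤ C := by
    have h := rpow_le_rpow (by positivity) hkey (inv_nonneg.mpr hm.le)
    rwa [mul_rpow hA.le (by positivity), ← rpow_mul hB.le, ← rpow_mul hC.le,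
      mul_inv_cancel₀ hm.ne', rpow_one, rpow_one] at h
  have hexp : A ^ (2 * x / (2 * x - 1)) = A * A ^ (2 * x - 1)⁻¹ := by
    rw [show 2 * x / (2 * x - 1) = 1 + (2 * x - 1)⁻¹ by field_simp; ring, rpow_add hA, rpow_one]
  have hpow : (2 : ℝ) ^ x * 2 ^ (-(2 * x)) = 2 ^ (-x) := by
    rw [← rpow_add two_pos]; ring_nf
  rw [hexp]
  refine le_of_mul_le_mul_left ?_ hB
  calc B * (2 ^ x * Gamma (x + 1) ^ 2 * (A * A ^ (2 * x - 1)⁻¹))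
      = 2 ^ x * Gamma (x + 1) ^ 2 * A * (A ^ (2 * x - 1)⁻¹ * B) := by ring
    _ ≤ 2 ^ x * Gamma (x + 1) ^ 2 * A * C := by gcongr
    _ = B * (Gamma (2 * x + 1) * C ^ 2) := by
      linear_combination (2 ^ x * Gamma (x + 1) * C) * hdup₁ - (Gamma (2 * x + 1) * C) * hdup₂ +
        (Gamma (2 * x + 1) * C * Gamma (x + 1) * √π) * hpow

end Real

/-- For every integer `n ≥ 2`,
`Γ(1+2n) · Γ(1+n/2)² ≥ 2ⁿ · Γ(1+n)² · Γ(1+(2n−1)/2)^(2n/(2n−1))`. -/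
theorem gamma_four_ineq_nat (n : ℕ) (hn : 2 ≤ n) :
    Real.Gamma (1 + 2 * (n : ℝ)) * Real.Gamma (1 + (n : ℝ) / 2) ^ 2 ≥
      (2 : ℝ) ^ (n : ℝ) * Real.Gamma (1 + (n : ℝ)) ^ 2 *
        Real.Gamma (1 + (2 * (n : ℝ) - 1) / 2) ^ (2 * (n : ℝ) / (2 * (n : ℝ) - 1)) := by
  have hx : (1 : ℝ) / 2 < n := by
    have : (2 : ℝ) ≤ n := mod_cast hn
    linarith
  have hcast : ((2 * n - 1 : ℕ) : ℝ) = 2 * n - 1 := by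
    rw [Nat.cast_sub (by omega)]; push_cast; ring
  have hkey := Gamma_nat_add_half_mul_pow_le hn
  rw [← rpow_natCast, ← rpow_natCast, hcast] at hkey
  exact gamma_four_ineq_of_Gamma_add_half_mul_rpow_le hx hkey
end

section
/- Let n ≥ 2 be an integer, let p ∈ [1,2], and let E be any (n−1)-dimensional linear subspace of ℝⁿ. Then |E ∩ B_p^n|_{n−1}^{1/(n−1)} ≥ |B_p^n|_n^{1/n}, where |·|_k denotes k-dimensional volume. -/
open MeasureTheory

section MeyerPajor

open Function Set Module
open scoped ENNReal

namespace MPsec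

variable {m : ℕ}

/-- section of a set along coordinate `i` -/
def sect (A : Set (Fin m → ℝ)) (i : Fin m) (x : Fin m → ℝ) : Set ℝ :=
  {t | Function.update x i t ∈ A}

/-- length (1-D volume) of the section -/
noncomputable def lsec (A : Set (Fin m → ℝ)) (i : Fin m) (x : Fin m → ℝ) : ℝ≥0∞ :=
  volume (sect A i x)

/-- Steiner symmetrization along coordinate `i` -/
def st (A : Set (Fin m → ℝ)) (i : Fin m) : Set (Fin m → ℝ) :=
  {x | ENNReal.ofReal (2 * |x i|) < lsec A i x}

lemma measurableSet_sect {A : Set (Fin m → ℝ)} (hA : MeasurableSet A) (i : Fin m)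
    (x : Fin m → ℝ) : MeasurableSet (sect A i x) :=
  hA.preimage (measurable_update x)

lemma lsec_update (A : Set (Fin m → ℝ)) (i : Fin m) (x : Fin m → ℝ) (t : ℝ) :
    lsec A i (Function.update x i t) = lsec A i x := by
  unfold lsec sect
  congr 1
  ext s
  simp [Function.update_idem]

lemma indicator_update {A : Set (Fin m → ℝ)} (i : Fin m) (x : Fin m → ℝ) (t : ℝ) :
    A.indicator (1 : (Fin m → ℝ) → ℝ≥0∞) (Function.update x i t)
      = (sect A i x).indicator (1 : ℝ → ℝ≥0∞) t := by
  by_cases h : Function.update x i t ∈ A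
  · rw [Set.indicator_of_mem h, Set.indicator_of_mem (show t ∈ sect A i x from h)]; rfl
  · rw [Set.indicator_of_notMem h, Set.indicator_of_notMem (show t ∉ sect A i x from h)]

lemma lsec_eq_lmarginal {A : Set (Fin m → ℝ)} (hA : MeasurableSet A) (i : Fin m) :
    lsec A i = ∫⋯∫⁻_{i}, A.indicator 1 := by
  ext x
  rw [lmarginal_singleton]
  unfold lsec
  rw [← lintegral_indicator_one (measurableSet_sect hA i x)]
  exact (lintegral_congr fun t => (indicator_update i x t).symm).symm

lemma measurable_lsec {A : Set (Fin m → ℝ)} (hA : MeasurableSet A) (i : Fin m) :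
    Measurable (lsec A i) := by
  rw [lsec_eq_lmarginal hA i]
  exact (measurable_one.indicator hA).lmarginal _

lemma measurableSet_st {A : Set (Fin m → ℝ)} (hA : MeasurableSet A) (i : Fin m) :
    MeasurableSet (st A i) := by
  have h1 : Measurable fun x : Fin m → ℝ => ENNReal.ofReal (2 * |x i|) :=
    (measurable_const.mul (measurable_pi_apply i).abs).ennreal_ofReal
  exact measurableSet_lt h1 (measurable_lsec hA i)

/-- 1-D fact: the symmetric open interval of length `L` has measure `L`. -/
lemma vol1d (L : ℝ≥0∞) : volume {t : ℝ | ENNReal.ofReal (2 * |t|) < L} = L := by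
  rcases eq_or_ne L ⊤ with rfl | hL
  · have : {t : ℝ | ENNReal.ofReal (2 * |t|) < ⊤} = Set.univ := by
      ext t; simp only [Set.mem_setOf_eq, Set.mem_univ, ENNReal.ofReal_lt_top]
    rw [this, Real.volume_univ]
  · set c := L.toReal with hc
    have hc0 : 0 ≤ c := ENNReal.toReal_nonneg
    have : {t : ℝ | ENNReal.ofReal (2 * |t|) < L} = Set.Ioo (-(c/2)) (c/2) := by
      ext t
      simp only [Set.mem_setOf_eq, Set.mem_Ioo]
      rw [ENNReal.ofReal_lt_iff_lt_toReal (by positivity) hL, ← hc]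
      constructor
      · intro h
        have h2 : |t| < c / 2 := by linarith
        rw [abs_lt] at h2
        exact ⟨by linarith [h2.1], h2.2⟩
      · intro h
        have : |t| < c / 2 := abs_lt.mpr ⟨by linarith [h.1], by linarith [h.2]⟩
        linarith
    rw [this, Real.volume_Ioo]
    rw [hc]
    rw [show c / 2 - -(c/2) = c by ring]
    exact ENNReal.ofReal_toReal hL

/-- membership of the section of the symmetrized set -/
lemma sect_st (A : Set (Fin m → ℝ)) (i : Fin m) (x : Fin m → ℝ) :
    sect (st A i) i x = {t : ℝ | ENNReal.ofReal (2 * |t|) < lsec A i x} := by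
  ext t
  simp only [sect, st, Set.mem_setOf_eq, Function.update_self]
  rw [lsec_update]

/-- Steiner symmetrization preserves volume. -/
lemma volume_st {A : Set (Fin m → ℝ)} (hA : MeasurableSet A) (i : Fin m) :
    volume (st A i) = volume A := by
  have hst : MeasurableSet (st A i) := measurableSet_st hA i
  have hf : Measurable (A.indicator (1 : (Fin m → ℝ) → ℝ≥0∞)) := measurable_one.indicator hA
  have hg : Measurable ((st A i).indicator (1 : (Fin m → ℝ) → ℝ≥0∞)) :=
    measurable_one.indicator hst
  have key : (∫⋯∫⁻_{i}, (st A i).indicator 1) = ∫⋯∫⁻_{i}, A.indicator 1 := by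
    rw [← lsec_eq_lmarginal hA i, ← lsec_eq_lmarginal hst i]
    ext x
    show volume (sect (st A i) i x) = volume (sect A i x)
    rw [sect_st, vol1d]
    rfl
  have := lintegral_eq_of_lmarginal_eq (μ := fun _ : Fin m => (volume : Measure ℝ))
    ({i} : Finset (Fin m)) hg hf key
  have hv : (volume : Measure (Fin m → ℝ)) = Measure.pi fun _ => volume := by
    simp [MeasureTheory.volume_pi]
  rw [← lintegral_indicator_one hst, ← lintegral_indicator_one hA, hv]
  exact this


/-- symmetry w.r.t. sign flip of coordinate `i` -/
def symmAt (i : Fin m) (A : Set (Fin m → ℝ)) : Prop :=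
  ∀ x ∈ A, Function.update x i (-(x i)) ∈ A

/-- pairwise squared-distance bound -/
def PD (D : ℝ) (A : Set (Fin m → ℝ)) : Prop :=
  ∀ x ∈ A, ∀ y ∈ A, ∑ j, (x j - y j) ^ 2 ≤ D ^ 2

lemma symmAt_st_self (A : Set (Fin m → ℝ)) (i : Fin m) : symmAt i (st A i) := by
  intro x hx
  simp only [st, Set.mem_setOf_eq] at hx ⊢
  rw [lsec_update, Function.update_self, abs_neg]
  exact hx

lemma symmAt_iff_of_symm {i : Fin m} {A : Set (Fin m → ℝ)} (hs : symmAt i A)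
    (x : Fin m → ℝ) : Function.update x i (-(x i)) ∈ A ↔ x ∈ A := by
  constructor
  · intro h
    have := hs _ h
    rwa [Function.update_self, neg_neg, Function.update_idem, Function.update_eq_self] at this
  · exact hs x

lemma symmAt_st {i j : Fin m} (hij : j ≠ i) {A : Set (Fin m → ℝ)} (hs : symmAt j A) :
    symmAt j (st A i) := by
  intro x hx
  simp only [st, Set.mem_setOf_eq] at hx ⊢
  have habs : |Function.update x j (-(x j)) i| = |x i| := by
    rw [Function.update_of_ne (Ne.symm hij)]
  have hsec : sect A i (Function.update x j (-(x j))) = sect A i x := by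
    ext t
    simp only [sect, Set.mem_setOf_eq]
    rw [Function.update_comm hij]
    have h1 : -(x j) = -((Function.update x i t) j) := by
      rw [Function.update_of_ne hij]
    rw [h1]
    exact symmAt_iff_of_symm hs _
  rw [habs]
  unfold lsec
  rw [hsec]
  exact hx

/-- Elements of a positive-length-section witness: the section is nonempty. -/
lemma sect_nonempty {A : Set (Fin m → ℝ)} {i : Fin m} {x : Fin m → ℝ} (hx : x ∈ st A i) :
    (sect A i x).Nonempty := by
  rw [Set.nonempty_iff_ne_empty]
  intro h
  simp only [st, Set.mem_setOf_eq, lsec, h, measure_empty] at hx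
  exact (not_lt.mpr zero_le) hx

/-- In a `PD D` set, any two elements of a section are within `D`. -/
lemma sect_pairwise {A : Set (Fin m → ℝ)} {D : ℝ} (hD0 : 0 ≤ D) (hPD : PD D A) {i : Fin m}
    {x : Fin m → ℝ} {a b : ℝ} (ha : a ∈ sect A i x) (hb : b ∈ sect A i x) : |a - b| ≤ D := by
  have h := hPD _ ha _ hb
  have hsum : ∑ j, (Function.update x i a j - Function.update x i b j) ^ 2 = (a - b) ^ 2 := by
    rw [← Finset.sum_subset (Finset.subset_univ {i})]
    · simp
    · intro j _ hj
      simp only [Finset.mem_singleton] at hj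
      rw [Function.update_of_ne hj, Function.update_of_ne hj, sub_self, zero_pow two_ne_zero]
  rw [hsum] at h
  calc |a - b| = Real.sqrt ((a-b)^2) := (Real.sqrt_sq_eq_abs _).symm
  _ ≤ Real.sqrt (D^2) := Real.sqrt_le_sqrt h
  _ = D := by rw [Real.sqrt_sq hD0]

lemma sect_bddAbove {A : Set (Fin m → ℝ)} {D : ℝ} (hD0 : 0 ≤ D) (hPD : PD D A) {i : Fin m}
    {x : Fin m → ℝ} {a : ℝ} (ha : a ∈ sect A i x) : BddAbove (sect A i x) := by
  refine ⟨a + D, fun b hb => ?_⟩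
  have := sect_pairwise hD0 hPD hb ha
  have := abs_le.mp this
  linarith [this.2]

lemma sect_bddBelow {A : Set (Fin m → ℝ)} {D : ℝ} (hD0 : 0 ≤ D) (hPD : PD D A) {i : Fin m}
    {x : Fin m → ℝ} {a : ℝ} (ha : a ∈ sect A i x) : BddBelow (sect A i x) := by
  refine ⟨a - D, fun b hb => ?_⟩
  have := sect_pairwise hD0 hPD hb ha
  have := abs_le.mp this
  linarith [this.1]

lemma vol_le_sub {s : Set ℝ} (hne : s.Nonempty) (hba : BddAbove s) (hbb : BddBelow s) :
    volume s ≤ ENNReal.ofReal (sSup s - sInf s) := by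
  have : s ⊆ Set.Icc (sInf s) (sSup s) := fun t ht => ⟨csInf_le hbb ht, le_csSup hba ht⟩
  calc volume s ≤ volume (Set.Icc (sInf s) (sSup s)) := measure_mono this
  _ = ENNReal.ofReal (sSup s - sInf s) := Real.volume_Icc

/-- Key 1-D extraction: two sections contain points at distance at least half of
the sum of their lengths, minus ε. -/
lemma exists_far_points {s u : Set ℝ} (hsne : s.Nonempty) (hune : u.Nonempty)
    (hsa : BddAbove s) (hsb : BddBelow s) (hua : BddAbove u) (hub : BddBelow u)
    {α β : ℝ} (hα : α ≤ sSup s - sInf s) (hβ : β ≤ sSup u - sInf u)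
    {ε : ℝ} (hε : 0 < ε) :
    ∃ a ∈ s, ∃ b ∈ u, (α + β) / 2 - 2 * ε ≤ |a - b| := by
  by_cases hcase : (α + β) / 2 ≤ sSup s - sInf u
  · obtain ⟨a, ha, hag⟩ := exists_lt_of_lt_csSup hsne (show sSup s - ε < sSup s by linarith)
    obtain ⟨b, hb, hbl⟩ := exists_lt_of_csInf_lt hune (show sInf u < sInf u + ε by linarith)
    refine ⟨a, ha, b, hb, ?_⟩
    have : (α + β) / 2 - 2*ε ≤ a - b := by linarith
    exact this.trans (le_abs_self _)
  · have hcase2 : (α + β) / 2 ≤ sSup u - sInf s := by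
      push_neg at hcase
      linarith
    obtain ⟨b, hb, hbg⟩ := exists_lt_of_lt_csSup hune (show sSup u - ε < sSup u by linarith)
    obtain ⟨a, ha, hal⟩ := exists_lt_of_csInf_lt hsne (show sInf s < sInf s + ε by linarith)
    refine ⟨a, ha, b, hb, ?_⟩
    have : (α + β) / 2 - 2*ε ≤ b - a := by linarith
    exact this.trans ((neg_sub a b) ▸ (neg_le_abs _ : -(a-b) ≤ |a - b|))

/-- Steiner symmetrization does not increase the (squared) diameter. -/
lemma PD_st {A : Set (Fin m → ℝ)} {D : ℝ} (hD0 : 0 ≤ D) (hPD : PD D A) (i : Fin m) :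
    PD D (st A i) := by
  intro x hx y hy
  -- sections
  set s := sect A i x with hs
  set u := sect A i y with hu
  have hsne : s.Nonempty := sect_nonempty hx
  have hune : u.Nonempty := sect_nonempty hy
  obtain ⟨a₀, ha₀⟩ := id hsne
  obtain ⟨b₀, hb₀⟩ := id hune
  have hsa := sect_bddAbove hD0 hPD ha₀
  have hsb := sect_bddBelow hD0 hPD ha₀
  have hua := sect_bddAbove hD0 hPD hb₀
  have hub := sect_bddBelow hD0 hPD hb₀
  -- finiteness and real lengths
  have hsvol : volume s ≤ ENNReal.ofReal (sSup s - sInf s) := vol_le_sub hsne hsa hsb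
  have huvol : volume u ≤ ENNReal.ofReal (sSup u - sInf u) := vol_le_sub hune hua hub
  have hsfin : volume s ≠ ⊤ := by
    exact ne_top_of_le_ne_top ENNReal.ofReal_ne_top hsvol
  have hufin : volume u ≠ ⊤ := by
    exact ne_top_of_le_ne_top ENNReal.ofReal_ne_top huvol
  set α := (volume s).toReal with hα
  set β := (volume u).toReal with hβ
  have hxα : 2 * |x i| < α := by
    have h' := hx
    simp only [st, Set.mem_setOf_eq, lsec] at h'
    rw [← hs] at h'
    rw [ENNReal.ofReal_lt_iff_lt_toReal (by positivity) hsfin] at h'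
    exact h'
  have hyβ : 2 * |y i| < β := by
    have h' := hy
    simp only [st, Set.mem_setOf_eq, lsec] at h'
    rw [← hu] at h'
    rw [ENNReal.ofReal_lt_iff_lt_toReal (by positivity) hufin] at h'
    exact h'
  have hαs : α ≤ sSup s - sInf s := by
    rw [hα]
    exact ENNReal.toReal_le_of_le_ofReal
      (by linarith [csInf_le_csSup hsne hsb hsa]) hsvol
  have hβu : β ≤ sSup u - sInf u := by
    rw [hβ]
    exact ENNReal.toReal_le_of_le_ofReal
      (by linarith [csInf_le_csSup hune hub hua]) huvol
  -- it suffices to bound by D^2 + ε' for all ε' > 0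
  have key : ∀ ε : ℝ, 0 < ε → ε ≤ 1 → ∑ j, (x j - y j) ^ 2 ≤ D ^ 2 + (4*D + 4) * ε := by
    intro ε hε hε1
    obtain ⟨a, ha, b, hb, hab⟩ :=
      exists_far_points hsne hune hsa hsb hua hub hαs hβu hε
    -- the two updated points are in A
    have hxa : Function.update x i a ∈ A := ha
    have hyb : Function.update y i b ∈ A := hb
    have hAbound := hPD _ hxa _ hyb
    -- split sums
    have hsplitA : ∑ j, (Function.update x i a j - Function.update y i b j) ^ 2
        = (a - b)^2 + ∑ j ∈ Finset.univ.erase i, (x j - y j) ^ 2 := by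
      rw [← Finset.add_sum_erase _ _ (Finset.mem_univ i)]
      congr 1
      · rw [Function.update_self, Function.update_self]
      · apply Finset.sum_congr rfl
        intro j hj
        rw [Function.update_of_ne (Finset.ne_of_mem_erase hj),
          Function.update_of_ne (Finset.ne_of_mem_erase hj)]
    have hsplitX : ∑ j, (x j - y j) ^ 2
        = (x i - y i)^2 + ∑ j ∈ Finset.univ.erase i, (x j - y j) ^ 2 :=
      (Finset.add_sum_erase _ _ (Finset.mem_univ i)).symm
    -- |a - b| ≤ D
    have habD : |a - b| ≤ D := by
      have h1 : (a-b)^2 ≤ D^2 := by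
        rw [hsplitA] at hAbound
        have : 0 ≤ ∑ j ∈ Finset.univ.erase i, (x j - y j) ^ 2 :=
          Finset.sum_nonneg fun j _ => sq_nonneg _
        linarith
      calc |a - b| = Real.sqrt ((a-b)^2) := (Real.sqrt_sq_eq_abs _).symm
      _ ≤ Real.sqrt (D^2) := Real.sqrt_le_sqrt h1
      _ = D := by rw [Real.sqrt_sq hD0]
    -- central coordinate bound
    have hxy : |x i - y i| ≤ |a - b| + 2*ε := by
      calc |x i - y i| ≤ |x i| + |y i| := abs_sub _ _
      _ ≤ (α + β)/2 := by linarith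
      _ ≤ |a - b| + 2*ε := by linarith
    have hxy2 : (x i - y i)^2 ≤ (|a-b| + 2*ε)^2 := by
      have h0 : 0 ≤ |a - b| + 2*ε := by positivity
      calc (x i - y i)^2 = |x i - y i|^2 := (sq_abs _).symm
      _ ≤ (|a-b| + 2*ε)^2 := by
          apply pow_le_pow_left₀ (abs_nonneg _) hxy
    have hexp : (|a-b| + 2*ε)^2 = (a-b)^2 + 4*ε*|a-b| + 4*ε^2 := by
      rw [add_sq, sq_abs]
      ring
    calc ∑ j, (x j - y j) ^ 2
        = (x i - y i)^2 + ∑ j ∈ Finset.univ.erase i, (x j - y j) ^ 2 := hsplitX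
      _ ≤ (a-b)^2 + 4*ε*|a-b| + 4*ε^2 + ∑ j ∈ Finset.univ.erase i, (x j - y j) ^ 2 := by
          rw [← hexp]; linarith [hxy2]
      _ = (∑ j, (Function.update x i a j - Function.update y i b j) ^ 2)
            + 4*ε*|a-b| + 4*ε^2 := by rw [hsplitA]; ring
      _ ≤ D^2 + 4*ε*D + 4*ε^2 := by
          have h4 : 4*ε*|a-b| ≤ 4*ε*D := by
            apply mul_le_mul_of_nonneg_left habD (by positivity)
          linarith
      _ ≤ D ^ 2 + (4*D + 4) * ε := by nlinarith [sq_nonneg ε, hε1, hε.le]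
  -- conclude
  by_contra hcon
  push_neg at hcon
  set δ := (∑ j, (x j - y j) ^ 2) - D^2 with hδ
  have hδ0 : 0 < δ := by simp only [hδ]; linarith
  have h4D : (0:ℝ) < 4*D + 4 := by linarith
  set ε := min (δ / (2 * (4*D+4))) 1 with hε
  have hε0 : 0 < ε := lt_min (by positivity) one_pos
  have := key ε hε0 (min_le_right _ _)
  have hεle : (4*D+4) * ε ≤ δ / 2 := by
    have : ε ≤ δ / (2 * (4*D+4)) := min_le_left _ _
    calc (4*D+4) * ε ≤ (4*D+4) * (δ / (2 * (4*D+4))) :=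
      mul_le_mul_of_nonneg_left this h4D.le
    _ = δ / 2 := by field_simp
  simp only [hδ] at hεle hδ0
  linarith


/-- iterate Steiner symmetrizations over a finite set of coordinates. -/
lemma exists_symmetrized (D : ℝ) (hD0 : 0 ≤ D) (s : Finset (Fin m)) :
    ∀ (A : Set (Fin m → ℝ)), MeasurableSet A → PD D A →
    ∃ B : Set (Fin m → ℝ), MeasurableSet B ∧ volume B = volume A ∧ PD D B ∧
      ∀ i ∈ s, symmAt i B := by
  induction s using Finset.induction_on with
  | empty => exact fun A hA hPD => ⟨A, hA, rfl, hPD, by simp⟩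
  | @insert i s his ih =>
      intro A hA hPD
      obtain ⟨B, hB, hvol, hPDB, hsym⟩ := ih A hA hPD
      refine ⟨st B i, measurableSet_st hB i, by rw [volume_st hB i, hvol],
        PD_st hD0 hPDB i, ?_⟩
      intro j hj
      rcases Finset.mem_insert.mp hj with rfl | hj'
      · exact symmAt_st_self B j
      · exact symmAt_st (by rintro rfl; exact his hj') (hsym j hj')

/-- a set symmetric under all coordinate sign flips is symmetric under negation. -/
lemma neg_mem_of_symm {B : Set (Fin m → ℝ)} (hsym : ∀ i : Fin m, symmAt i B)
    {x : Fin m → ℝ} (hx : x ∈ B) : (fun j => -(x j)) ∈ B := by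
  suffices h : ∀ s : Finset (Fin m), (fun j => if j ∈ s then -(x j) else x j) ∈ B by
    have := h Finset.univ
    simpa using this
  intro s
  induction s using Finset.induction_on with
  | empty => simpa using hx
  | @insert i s his ih =>
      have := hsym i _ ih
      convert this using 1
      funext j
      rcases eq_or_ne j i with rfl | hji
      · simp [Function.update_self, his]
      · simp [Function.update_of_ne hji, Finset.mem_insert, hji]

/-- Isodiametric inequality on `Fin m → ℝ` with the Euclidean (sum-of-squares) metric. -/
theorem isodiam_pi (hm : 0 < m) (A : Set (Fin m → ℝ)) (hA : MeasurableSet A) {D : ℝ}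
    (hD0 : 0 ≤ D) (hD : PD D A) :
    volume A ≤ (ENNReal.ofReal (D/2)) ^ m *
      ENNReal.ofReal (Real.sqrt Real.pi ^ m / Real.Gamma (m / 2 + 1)) := by
  obtain ⟨B, hB, hvol, hPDB, hsym⟩ := exists_symmetrized D hD0 Finset.univ A hA hD
  have hball : B ⊆ {x : Fin m → ℝ | ∑ j, (x j) ^ 2 ≤ (D/2)^2} := by
    intro x hx
    have hnx := neg_mem_of_symm (fun i => hsym i (Finset.mem_univ i)) hx
    have := hPDB x hx _ hnx
    simp only [Set.mem_setOf_eq]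
    have h4 : ∑ j, (x j - -(x j)) ^ 2 = 4 * ∑ j, (x j)^2 := by
      rw [Finset.mul_sum]
      apply Finset.sum_congr rfl
      intro j _
      ring
    rw [h4] at this
    linarith
  calc volume A = volume B := hvol.symm
    _ ≤ volume {x : Fin m → ℝ | ∑ j, (x j) ^ 2 ≤ (D/2)^2} := measure_mono hball
    _ ≤ (ENNReal.ofReal (D/2)) ^ m *
      ENNReal.ofReal (Real.sqrt Real.pi ^ m / Real.Gamma (m / 2 + 1)) := by
        -- transfer to EuclideanSpace and use the closed ball volume
        have : Nonempty (Fin m) := ⟨⟨0, hm⟩⟩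
        have hmeq := EuclideanSpace.volume_preserving_symm_measurableEquiv_toLp (Fin m)
        have hmeas : MeasurableSet {x : Fin m → ℝ | ∑ j, (x j) ^ 2 ≤ (D/2)^2} :=
          measurableSet_le (by fun_prop) measurable_const
        have hpre : ((MeasurableEquiv.toLp 2 (Fin m → ℝ)).symm) ⁻¹'
            {x : Fin m → ℝ | ∑ j, (x j) ^ 2 ≤ (D/2)^2}
            = Metric.closedBall (0 : EuclideanSpace ℝ (Fin m)) (D/2) := by
          ext x
          rw [Set.mem_preimage, Metric.mem_closedBall, dist_zero_right,
            EuclideanSpace.norm_eq, Set.mem_setOf_eq]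
          simp only [MeasurableEquiv.coe_toLp_symm,
            Real.norm_eq_abs, sq_abs]
          rw [Real.sqrt_le_iff ]
          exact ⟨fun h => ⟨by linarith, h⟩, fun h => h.2⟩
        refine le_of_eq ?_
        calc volume {x : Fin m → ℝ | ∑ j, (x j) ^ 2 ≤ (D/2)^2}
            = volume (((MeasurableEquiv.toLp 2 (Fin m → ℝ)).symm) ⁻¹'
              {x : Fin m → ℝ | ∑ j, (x j) ^ 2 ≤ (D/2)^2}) :=
              (hmeq.measure_preimage hmeas.nullMeasurableSet).symm
          _ = volume (Metric.closedBall (0 : EuclideanSpace ℝ (Fin m)) (D/2)) := by rw [hpre]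
          _ = (ENNReal.ofReal (D/2)) ^ m *
              ENNReal.ofReal (Real.sqrt Real.pi ^ m / Real.Gamma (m / 2 + 1)) := by
              rw [EuclideanSpace.volume_closedBall]
              simp [Fintype.card_fin]

/-- Isodiametric inequality in Euclidean space. -/
theorem isodiam_euc {m : ℕ} (hm : 0 < m) (A : Set (EuclideanSpace ℝ (Fin m)))
    (hA : MeasurableSet A) {D : ℝ} (hD0 : 0 ≤ D)
    (hD : ∀ x ∈ A, ∀ y ∈ A, dist x y ≤ D) :
    volume A ≤ (ENNReal.ofReal (D/2)) ^ m *
      ENNReal.ofReal (Real.sqrt Real.pi ^ m / Real.Gamma (m / 2 + 1)) := by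
  have hmeq := (EuclideanSpace.volume_preserving_symm_measurableEquiv_toLp (Fin m)).symm
  have hA' : MeasurableSet (((MeasurableEquiv.toLp 2 (Fin m → ℝ)).symm).symm ⁻¹' A) :=
    ((MeasurableEquiv.toLp 2 (Fin m → ℝ)).symm).symm.measurable hA
  have hvol : volume A = volume (((MeasurableEquiv.toLp 2 (Fin m → ℝ)).symm).symm ⁻¹' A) :=
    (hmeq.measure_preimage hA.nullMeasurableSet).symm
  rw [hvol]
  apply isodiam_pi hm _ hA' hD0
  intro x hx y hy
  have h := hD _ hx _ hy
  rw [EuclideanSpace.dist_eq] at h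
  simp only [Real.dist_eq, sq_abs, MeasurableEquiv.symm_symm, MeasurableEquiv.coe_toLp,
    WithLp.ofLp_toLp] at h
  nlinarith [Real.sq_sqrt (show (0:ℝ) ≤ ∑ j, (x j - y j)^2 from
    Finset.sum_nonneg fun j _ => sq_nonneg _), Real.sqrt_nonneg (∑ j, (x j - y j)^2), hD0]

/-- Lower bound for the Hausdorff measure of a set in an `d`-dimensional subspace
containing a ball of the subspace. -/
theorem hausdorff_lower (n : ℕ) (E : Submodule ℝ (EuclideanSpace ℝ (Fin n)))
    (hd : 0 < finrank ℝ E) (S : Set (EuclideanSpace ℝ (Fin n))) (hS : MeasurableSet S)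
    {r : ℝ} (hr : 0 ≤ r)
    (hsub : ∀ v : EuclideanSpace ℝ (Fin n), v ∈ E → ‖v‖ ≤ r → v ∈ S) :
    (ENNReal.ofReal (2*r)) ^ (finrank ℝ E) ≤ μH[(finrank ℝ E : ℝ)] S := by
  classical
  set d := finrank ℝ E with hd'
  have : Nonempty (Fin d) := ⟨⟨0, hd⟩⟩
  set ω : ℝ := Real.sqrt Real.pi ^ d / Real.Gamma (d / 2 + 1) with hω
  have hω0 : 0 < ω := by
    apply div_pos (pow_pos (Real.sqrt_pos.mpr Real.pi_pos) _)
    apply Real.Gamma_pos_of_pos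
    positivity
  set b := stdOrthonormalBasis ℝ E
  set F : EuclideanSpace ℝ (Fin d) → EuclideanSpace ℝ (Fin n) :=
    fun v => ((b.repr.symm v : E) : EuclideanSpace ℝ (Fin n)) with hF
  have hFdist : ∀ u v, dist (F u) (F v) = dist u v := by
    intro u v
    rw [dist_eq_norm, dist_eq_norm, hF]
    have : ((b.repr.symm u : E) : EuclideanSpace ℝ (Fin n))
        - ((b.repr.symm v : E) : EuclideanSpace ℝ (Fin n))
        = ((b.repr.symm u - b.repr.symm v : E) : EuclideanSpace ℝ (Fin n)) := by
      push_cast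
      ring
    rw [this, Submodule.norm_coe, ← map_sub]
    exact b.repr.symm.norm_map _
  have hFcont : Continuous F := continuous_subtype_val.comp b.repr.symm.continuous
  have hFmeas : Measurable F := hFcont.measurable
  set c : ℝ≥0∞ := ENNReal.ofReal (2 ^ d / ω) with hc
  set μ : Measure (EuclideanSpace ℝ (Fin n)) := c • Measure.map F volume with hμ
  -- Frostman condition
  have hfrost : μ ≤ μH[(d : ℝ)] := by
    apply Measure.le_hausdorffMeasure _ _ 1 one_pos
    intro s hs
    have hsbdd : Bornology.IsBounded s :=
      Metric.isBounded_iff_ediam_ne_top.mpr (lt_of_le_of_lt hs ENNReal.one_lt_top).ne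
    have hD0 : 0 ≤ Metric.diam s := Metric.diam_nonneg
    have hμs : μ s ≤ μ (closure s) := measure_mono subset_closure
    have hclos : MeasurableSet (closure s) := isClosed_closure.measurableSet
    have hμcl : μ (closure s) = c * volume (F ⁻¹' closure s) := by
      rw [hμ, Measure.smul_apply, smul_eq_mul, Measure.map_apply hFmeas hclos]
    have hpair : ∀ x ∈ F ⁻¹' closure s, ∀ y ∈ F ⁻¹' closure s,
        dist x y ≤ Metric.diam s := by
      intro x hx y hy
      rw [← hFdist]
      rw [← Metric.diam_closure]
      exact Metric.dist_le_diam_of_mem hsbdd.closure hx hy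
    have hiso := isodiam_euc hd _ (hclos.preimage hFmeas) hD0 hpair
    have hcalc : c * ((ENNReal.ofReal (Metric.diam s / 2)) ^ d * ENNReal.ofReal ω)
        = ENNReal.ofReal (Metric.diam s) ^ d := by
      rw [← ENNReal.ofReal_pow (by linarith), ← ENNReal.ofReal_mul (by positivity), hc,
        ← ENNReal.ofReal_mul (by positivity), ← ENNReal.ofReal_pow hD0]
      congr 1
      field_simp
      rw [← mul_pow]; congr 1; ring
    have hed : EMetric.diam s = ENNReal.ofReal (Metric.diam s) := by
      rw [Metric.diam]
      exact (ENNReal.ofReal_toReal hsbdd.ediam_ne_top).symm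
    calc μ s ≤ c * volume (F ⁻¹' closure s) := hμs.trans (le_of_eq hμcl)
      _ ≤ c * ((ENNReal.ofReal (Metric.diam s / 2)) ^ d * ENNReal.ofReal ω) := by
          exact mul_le_mul_right hiso c
      _ = ENNReal.ofReal (Metric.diam s) ^ d := hcalc
      _ = EMetric.diam s ^ (d : ℝ) := by rw [hed, ← ENNReal.rpow_natCast]
  -- lower bound for μ S
  have hmass : (ENNReal.ofReal (2*r)) ^ d ≤ μ S := by
    have hsub' : Metric.closedBall (0 : EuclideanSpace ℝ (Fin d)) r ⊆ F ⁻¹' S := by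
      intro v hv
      rw [Metric.mem_closedBall, dist_zero_right] at hv
      apply hsub
      · exact SetLike.coe_mem _
      · show ‖((b.repr.symm v : E) : EuclideanSpace ℝ (Fin n))‖ ≤ r
        rw [Submodule.norm_coe, b.repr.symm.norm_map]
        exact hv
    have hball : volume (Metric.closedBall (0 : EuclideanSpace ℝ (Fin d)) r)
        = (ENNReal.ofReal r) ^ d * ENNReal.ofReal ω := by
      rw [EuclideanSpace.volume_closedBall]
      simp [Fintype.card_fin]; rfl
    calc (ENNReal.ofReal (2*r)) ^ d
        = c * ((ENNReal.ofReal r) ^ d * ENNReal.ofReal ω) := by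
          rw [← ENNReal.ofReal_pow hr, ← ENNReal.ofReal_mul (by positivity), hc,
            ← ENNReal.ofReal_mul (by positivity), ← ENNReal.ofReal_pow (by linarith)]
          congr 1
          field_simp
          ring
      _ = c * volume (Metric.closedBall (0 : EuclideanSpace ℝ (Fin d)) r) := by rw [hball]
      _ ≤ c * volume (F ⁻¹' S) := by
          exact mul_le_mul_right (measure_mono hsub') c
      _ = μ S := by rw [hμ, Measure.smul_apply, smul_eq_mul, Measure.map_apply hFmeas hS]
  exact hmass.trans (hfrost S)


/-- `n^n ≤ (n!)^2` -/
lemma nat_pow_le_factorial_sq (n : ℕ) : n ^ n ≤ (n.factorial)^2 := by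
  have h1 : ∏ j ∈ Finset.range n, (j+1) = n.factorial := Finset.prod_range_add_one_eq_factorial n
  have h2 : ∏ j ∈ Finset.range n, (n-j) = n.factorial := by
    rw [← h1, ← Finset.prod_range_reflect]
    apply Finset.prod_congr rfl
    intro j hj
    have hj' := Finset.mem_range.mp hj
    omega
  have h3 : (n.factorial)^2 = ∏ j ∈ Finset.range n, (j+1)*(n-j) := by
    rw [Finset.prod_mul_distrib, h1, h2, sq]
  rw [h3]
  calc n ^ n = ∏ _j ∈ Finset.range n, n := by rw [Finset.prod_const, Finset.card_range]
    _ ≤ ∏ j ∈ Finset.range n, (j+1)*(n-j) := by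
        apply Finset.prod_le_prod'
        intro j hj
        have hj' := Finset.mem_range.mp hj
        have : (j+1)*(n-j) = (n-j) + j*(n-j) := by ring
        have h4 : j*(n-j) ≥ j*1 := Nat.mul_le_mul_left j (by omega)
        omega

/-- `√n ^ n ≤ n!` in the reals. -/
lemma sqrt_pow_le_factorial (n : ℕ) : ((n:ℝ) ^ ((1:ℝ)/2)) ^ n ≤ (n.factorial : ℝ) := by
  have hn0 : (0:ℝ) ≤ (n:ℝ) := Nat.cast_nonneg n
  have ha0 : (0:ℝ) ≤ ((n:ℝ) ^ ((1:ℝ)/2)) ^ n := by positivity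
  have hsq : (((n:ℝ) ^ ((1:ℝ)/2)) ^ n) ^ 2 = ((n:ℝ))^n := by
    rw [← pow_mul, mul_comm n 2, pow_mul]
    congr 1
    rw [← Real.rpow_natCast ((n:ℝ) ^ ((1:ℝ)/2)) 2, ← Real.rpow_mul hn0]
    norm_num
  have hcast : ((n:ℝ))^n ≤ ((n.factorial : ℝ))^2 := by
    have := nat_pow_le_factorial_sq n
    exact_mod_cast this
  calc ((n:ℝ) ^ ((1:ℝ)/2)) ^ n
      = Real.sqrt ((((n:ℝ) ^ ((1:ℝ)/2)) ^ n)^2) := (Real.sqrt_sq ha0).symm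
    _ ≤ Real.sqrt (((n.factorial : ℝ))^2) := Real.sqrt_le_sqrt (by rw [hsq]; exact hcast)
    _ = (n.factorial : ℝ) := Real.sqrt_sq (Nat.cast_nonneg _)

variable {n : ℕ}

/-- power-mean: if `∑ |x i|^p ≤ 1`, `p ≥ 1`, then `∑ |x i| ≤ n^(1-1/p)`. -/
lemma pm_l1 (hn : 0 < n) {p : ℝ} (hp1 : 1 ≤ p) (x : Fin n → ℝ)
    (hx : ∑ i, |x i| ^ p ≤ 1) : ∑ i, |x i| ≤ (n:ℝ) ^ (1 - 1/p) := by
  have hn0 : (0:ℝ) < (n:ℝ) := by exact_mod_cast hn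
  have key := Real.arith_mean_le_rpow_mean Finset.univ (fun _ => 1/(n:ℝ)) (fun i => |x i|)
    (fun i _ => by positivity) (by
      rw [Finset.sum_const, Finset.card_univ, Fintype.card_fin, nsmul_eq_mul]
      field_simp) (fun i _ => abs_nonneg _) hp1
  have h2 : ∑ i, 1/(n:ℝ) * |x i| ^ p = (1/(n:ℝ)) * ∑ i, |x i| ^ p := by
    rw [Finset.mul_sum]
  have h3 : (∑ i, 1/(n:ℝ) * |x i| ^ p) ^ (1/p) ≤ ((1:ℝ)/(n:ℝ)) ^ (1/p) := by
    apply Real.rpow_le_rpow (by positivity) _ (by positivity)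
    rw [h2]
    calc (1/(n:ℝ)) * ∑ i, |x i| ^ p ≤ (1/(n:ℝ)) * 1 :=
      mul_le_mul_of_nonneg_left hx (by positivity)
    _ = 1/(n:ℝ) := mul_one _
  have h4 : ∑ i, 1/(n:ℝ) * |x i| = (1/(n:ℝ)) * ∑ i, |x i| := by rw [Finset.mul_sum]
  have h5 : (1/(n:ℝ)) * ∑ i, |x i| ≤ (1/(n:ℝ)) ^ (1/p) := by
    rw [← h4]; exact key.trans h3
  have h6 : ((1:ℝ)/(n:ℝ)) ^ ((1:ℝ)/p) = (n:ℝ) ^ (-(1/p)) := by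
    rw [one_div, Real.inv_rpow hn0.le, ← Real.rpow_neg hn0.le]
  calc ∑ i, |x i| = (n:ℝ) * ((1/(n:ℝ)) * ∑ i, |x i|) := by field_simp
    _ ≤ (n:ℝ) * ((1/(n:ℝ)) ^ (1/p)) := mul_le_mul_of_nonneg_left h5 hn0.le
    _ = (n:ℝ) ^ (1 - 1/p) := by
        rw [h6]
        nth_rewrite 1 [← Real.rpow_one (n:ℝ)]
        rw [← Real.rpow_add hn0]
        ring_nf
    

/-- power-mean: if `‖x‖ ≤ n^(1/2-1/p)` then `x` is in the `ℓᵖ` unit ball, for `1 ≤ p ≤ 2`. -/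
lemma pm_ball (hn : 0 < n) {p : ℝ} (hp1 : 1 ≤ p) (hp2 : p ≤ 2)
    (x : EuclideanSpace ℝ (Fin n)) (hx : ‖x‖ ≤ (n:ℝ) ^ ((1:ℝ)/2 - 1/p)) :
    ∑ i, |x i| ^ p ≤ 1 := by
  have hn0 : (0:ℝ) < (n:ℝ) := by exact_mod_cast hn
  have hp0 : 0 < p := by linarith
  have hq1 : 1 ≤ 2/p := by
    rw [le_div_iff₀ hp0]; linarith
  -- ∑ (1/n) * |x i|^p ≤ (∑ (1/n) * (|x i|^p)^(2/p))^(p/2)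
  have key := Real.arith_mean_le_rpow_mean Finset.univ (fun _ => 1/(n:ℝ))
    (fun i => |x i| ^ p) (fun i _ => by positivity) (by
      rw [Finset.sum_const, Finset.card_univ, Fintype.card_fin, nsmul_eq_mul]
      field_simp) (fun i _ => by positivity) hq1
  have habs : ∀ i, (|x i| ^ p) ^ ((2:ℝ)/p) = (x i)^2 := by
    intro i
    rw [← Real.rpow_natCast (x i) 2, ← Real.rpow_mul (abs_nonneg _)]
    rw [mul_div_cancel₀ _ (ne_of_gt hp0)]
    rw [show ((2:ℕ):ℝ) = (2:ℝ) by norm_num]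
    rw [Real.rpow_two, Real.rpow_two, sq_abs]
  have hnorm : ∑ i, (x i)^2 = ‖x‖^2 := by
    rw [EuclideanSpace.norm_eq, Real.sq_sqrt (by positivity)]
    apply Finset.sum_congr rfl
    intro i _
    rw [Real.norm_eq_abs, sq_abs]
  have hr2 : ‖x‖^2 ≤ (n:ℝ) ^ (1 - 2/p) := by
    have h0 : (0:ℝ) ≤ ‖x‖ := norm_nonneg _
    calc ‖x‖^2 ≤ ((n:ℝ) ^ ((1:ℝ)/2 - 1/p))^2 := by
          apply pow_le_pow_left₀ h0 hx
      _ = (n:ℝ) ^ (1 - 2/p) := by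
          rw [← Real.rpow_natCast ((n:ℝ) ^ ((1:ℝ)/2 - 1/p)) 2, ← Real.rpow_mul hn0.le]
          congr 1
          push_cast
          ring
  have hsum2 : ∑ i, 1/(n:ℝ) * ((|x i| ^ p) ^ ((2:ℝ)/p)) = (1/(n:ℝ)) * ‖x‖^2 := by
    simp_rw [habs]
    rw [← Finset.mul_sum, hnorm]
  have h3 : (∑ i, 1/(n:ℝ) * ((|x i| ^ p) ^ ((2:ℝ)/p))) ^ ((1:ℝ)/(2/p)) ≤ 1/(n:ℝ) := by
    rw [hsum2]
    have hle : (1/(n:ℝ)) * ‖x‖^2 ≤ (1/(n:ℝ)) * (n:ℝ) ^ (1 - 2/p) :=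
      mul_le_mul_of_nonneg_left hr2 (by positivity)
    calc ((1/(n:ℝ)) * ‖x‖^2) ^ ((1:ℝ)/(2/p))
        ≤ ((1/(n:ℝ)) * (n:ℝ) ^ (1 - 2/p)) ^ ((1:ℝ)/(2/p)) := by
          apply Real.rpow_le_rpow (by positivity) hle (by positivity)
      _ = ((n:ℝ) ^ (-(2/p))) ^ ((1:ℝ)/(2/p)) := by
          congr 1
          rw [one_div, Real.rpow_sub hn0, Real.rpow_one]
          rw [Real.rpow_neg hn0.le]
          field_simp
      _ = 1/(n:ℝ) := by
          rw [← Real.rpow_mul hn0.le]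
          have hp2' : (2:ℝ)/p ≠ 0 := by positivity
          rw [show -(2/p) * ((1:ℝ)/(2/p)) = -1 by field_simp]
          rw [Real.rpow_neg_one, one_div]
  have h5 : (1/(n:ℝ)) * ∑ i, |x i| ^ p ≤ 1/(n:ℝ) := by
    rw [← Finset.mul_sum] at key
    exact key.trans h3
  calc ∑ i, |x i| ^ p = (n:ℝ) * ((1/(n:ℝ)) * ∑ i, |x i| ^ p) := by field_simp
    _ ≤ (n:ℝ) * (1/(n:ℝ)) := mul_le_mul_of_nonneg_left h5 hn0.le
    _ = 1 := by field_simp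


/-- continuity of the `ℓᵖ`-sum on the pi type -/
lemma cont_sum_pi (p : ℝ) (hp0 : 0 ≤ p) :
    Continuous fun x : Fin n → ℝ => ∑ i, |x i| ^ p := by
  apply continuous_finset_sum
  intro i _
  exact ((continuous_apply i).abs).rpow_const (fun x => Or.inr hp0)

lemma cont_sum_euc (p : ℝ) (hp0 : 0 ≤ p) :
    Continuous fun x : EuclideanSpace ℝ (Fin n) => ∑ i, |x i| ^ p := by
  apply continuous_finset_sum
  intro i _
  exact ((continuous_apply i).comp (PiLp.continuous_ofLp 2 (fun _ : Fin n => ℝ))).abs.rpow_const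
    (fun x => Or.inr hp0)

/-- Volume upper bound for the `ℓᵖ` unit ball in Euclidean space. -/
lemma vol_bound (hn : 2 ≤ n) {p : ℝ} (hp1 : 1 ≤ p) :
    volume {x : EuclideanSpace ℝ (Fin n) | ∑ i, |x i| ^ p ≤ 1}
      ≤ ENNReal.ofReal ((2 * (n:ℝ) ^ ((1:ℝ)/2 - 1/p)) ^ n) := by
  have hn0 : 0 < n := by omega
  have hn0' : (0:ℝ) < (n:ℝ) := by exact_mod_cast hn0
  have : Nonempty (Fin n) := ⟨⟨0, hn0⟩⟩
  have hp0 : (0:ℝ) < p := by linarith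
  set r : ℝ := (n:ℝ) ^ ((1:ℝ)/2 - 1/p) with hr
  have hr0 : 0 < r := Real.rpow_pos_of_pos hn0' _
  set R : ℝ := (n:ℝ) ^ (1 - 1/p) with hR
  -- transfer to the pi type
  set Kpi : Set (Fin n → ℝ) := {x | ∑ i, |x i| ^ p ≤ 1} with hKpi
  have hKmeas : MeasurableSet Kpi :=
    (isClosed_le (cont_sum_pi p hp0.le) continuous_const).measurableSet
  have htrans : volume {x : EuclideanSpace ℝ (Fin n) | ∑ i, |x i| ^ p ≤ 1} = volume Kpi := by
    have hpre : ((MeasurableEquiv.toLp 2 (Fin n → ℝ)).symm) ⁻¹' Kpi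
        = {x : EuclideanSpace ℝ (Fin n) | ∑ i, |x i| ^ p ≤ 1} := by
      ext x
      simp only [Set.mem_preimage, hKpi, Set.mem_setOf_eq,
        MeasurableEquiv.coe_toLp_symm]
    rw [← hpre,
      (EuclideanSpace.volume_preserving_symm_measurableEquiv_toLp (Fin n)).measure_preimage
        hKmeas.nullMeasurableSet]
  rw [htrans]
  -- include into the scaled ℓ¹ ball
  have hsub : Kpi ⊆ {x : Fin n → ℝ | (∑ i, |x i| ^ (1:ℝ)) ^ ((1:ℝ)/1) ≤ R} := by
    intro x hx
    simp only [Set.mem_setOf_eq, Real.rpow_one, div_one]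
    exact pm_l1 hn0 hp1 x hx
  have hvol1 := MeasureTheory.volume_sum_rpow_le (Fin n) (le_refl (1:ℝ)) R
  calc volume Kpi ≤ volume {x : Fin n → ℝ | (∑ i, |x i| ^ (1:ℝ)) ^ ((1:ℝ)/1) ≤ R} :=
        measure_mono hsub
    _ = (ENNReal.ofReal R) ^ n *
        ENNReal.ofReal ((2 * Real.Gamma (1/1 + 1)) ^ n / Real.Gamma (n/1 + 1)) := by
        rw [hvol1, Fintype.card_fin]
    _ ≤ ENNReal.ofReal ((2 * r) ^ n) := by
        have hg1 : Real.Gamma ((1:ℝ)/1 + 1) = 1 := by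
          norm_num [Real.Gamma_two]
        have hg2 : Real.Gamma ((n:ℝ)/1 + 1) = (n.factorial : ℝ) := by
          rw [div_one]
          exact_mod_cast Real.Gamma_nat_eq_factorial n
        rw [hg1, hg2]
        rw [← ENNReal.ofReal_pow (by positivity : (0:ℝ) ≤ R),
          ← ENNReal.ofReal_mul (by positivity)]
        apply ENNReal.ofReal_le_ofReal
        -- real inequality: R^n * (2^n / n!) ≤ (2r)^n
        have hfact : (0:ℝ) < (n.factorial : ℝ) := by exact_mod_cast n.factorial_pos
        rw [mul_one, ← mul_div_assoc, div_le_iff₀ hfact]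
        have hRr : R = r * (n:ℝ) ^ ((1:ℝ)/2) := by
          rw [hR, hr, ← Real.rpow_add hn0']
          congr 1
          ring
        calc R ^ n * 2 ^ n = (2*r)^n * ((n:ℝ) ^ ((1:ℝ)/2))^n := by
              rw [hRr, mul_pow, mul_pow]
              ring
          _ ≤ (2*r)^n * (n.factorial : ℝ) :=
              mul_le_mul_of_nonneg_left (sqrt_pow_le_factorial n) (by positivity)

end MPsec

end MeyerPajor

open MeasureTheory MPsec Module

/-- Every `(n−1)`-dimensional central section of `B_p^n`, `1 ≤ p ≤ 2`, has
`(n−1)`-dimensional volume (to the power `1/(n−1)`) at least `|B_p^n|^(1/n)`. -/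
theorem section_hyperplane_Bp (n : ℕ) (hn : 2 ≤ n) (p : ℝ) (hp1 : 1 ≤ p) (hp2 : p ≤ 2)
    (E : Submodule ℝ (EuclideanSpace ℝ (Fin n)))
    (hE : Module.finrank ℝ E = n - 1) :
    (μH[(n : ℝ) - 1] ((E : Set (EuclideanSpace ℝ (Fin n))) ∩
        {x : EuclideanSpace ℝ (Fin n) | ∑ i, |x i| ^ p ≤ 1})) ^ (1 / ((n : ℝ) - 1)) ≥
      (volume {x : EuclideanSpace ℝ (Fin n) | ∑ i, |x i| ^ p ≤ 1}) ^ (1 / (n : ℝ)) := by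
  have hn0 : 0 < n := by omega
  have hn0' : (0:ℝ) < (n:ℝ) := by exact_mod_cast hn0
  have hp0 : (0:ℝ) < p := by linarith
  set r : ℝ := (n:ℝ) ^ ((1:ℝ)/2 - 1/p) with hr
  have hr0 : 0 < r := Real.rpow_pos_of_pos hn0' _
  set K : Set (EuclideanSpace ℝ (Fin n)) := {x | ∑ i, |x i| ^ p ≤ 1} with hK
  have hKmeas : MeasurableSet K :=
    (isClosed_le (cont_sum_euc p hp0.le) continuous_const).measurableSet
  have hEmeas : MeasurableSet (E : Set (EuclideanSpace ℝ (Fin n))) :=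
    E.closed_of_finiteDimensional.measurableSet
  have hSB : MeasurableSet ((E : Set (EuclideanSpace ℝ (Fin n))) ∩ K) :=
    hEmeas.inter hKmeas
  have hdcast : ((finrank ℝ E : ℕ) : ℝ) = (n:ℝ) - 1 := by
    rw [hE]
    have : (1:ℕ) ≤ n := by omega
    push_cast [Nat.cast_sub this]
    ring
  have hd0 : 0 < finrank ℝ E := by
    rw [hE]; omega
  -- lower bound on the Hausdorff measure of the section
  have hlow : (ENNReal.ofReal (2*r)) ^ (finrank ℝ E) ≤
      μH[(n:ℝ) - 1] ((E : Set (EuclideanSpace ℝ (Fin n))) ∩ K) := by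
    rw [← hdcast]
    apply hausdorff_lower n E hd0 _ hSB (by positivity)
    intro v hvE hvr
    exact ⟨hvE, pm_ball hn0 hp1 hp2 v hvr⟩
  -- upper bound on the volume
  have hvol : volume K ≤ (ENNReal.ofReal (2*r)) ^ n := by
    rw [← ENNReal.ofReal_pow (by positivity)]
    exact vol_bound hn hp1
  -- conclude via rpow computations
  have h2r0 : ENNReal.ofReal (2*r) ≠ 0 := by
    simp [ENNReal.ofReal_eq_zero]
    linarith
  have h2rtop : ENNReal.ofReal (2*r) ≠ ⊤ := ENNReal.ofReal_ne_top
  have hRHS : (volume K) ^ (1/(n:ℝ)) ≤ ENNReal.ofReal (2*r) := by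
    calc (volume K) ^ (1/(n:ℝ)) ≤ ((ENNReal.ofReal (2*r)) ^ n) ^ (1/(n:ℝ)) :=
          ENNReal.rpow_le_rpow hvol (by positivity)
      _ = ENNReal.ofReal (2*r) := by
          rw [← ENNReal.rpow_natCast (ENNReal.ofReal (2*r)) n, ← ENNReal.rpow_mul]
          rw [show (n:ℝ) * (1/(n:ℝ)) = 1 by field_simp]
          exact ENNReal.rpow_one _
  have hLHS : ENNReal.ofReal (2*r) ≤
      (μH[(n:ℝ) - 1] ((E : Set (EuclideanSpace ℝ (Fin n))) ∩ K)) ^ (1/((n:ℝ)-1)) := by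
    have hne : ((n:ℝ) - 1) ≠ 0 := by
      have : (2:ℝ) ≤ (n:ℝ) := by exact_mod_cast hn
      linarith
    calc ENNReal.ofReal (2*r)
        = ((ENNReal.ofReal (2*r)) ^ (finrank ℝ E)) ^ (1/((n:ℝ)-1)) := by
          rw [← ENNReal.rpow_natCast (ENNReal.ofReal (2*r)) (finrank ℝ E), ← ENNReal.rpow_mul,
            hdcast, show ((n:ℝ)-1) * (1/((n:ℝ)-1)) = 1 by field_simp]
          exact (ENNReal.rpow_one _).symm
      _ ≤ (μH[(n:ℝ) - 1] ((E : Set (EuclideanSpace ℝ (Fin n))) ∩ K)) ^ (1/((n:ℝ)-1)) := by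
          apply ENNReal.rpow_le_rpow hlow
          have : (2:ℝ) ≤ (n:ℝ) := by exact_mod_cast hn
          exact one_div_nonneg.mpr (by linarith)
  exact le_trans hRHS hLHS
end

section
/- For every integer n ≥ 1, one has n^{1/2} · Γ(1 + n/2)^{1/n} / (Γ(1 + 1/2) · Γ(n+1)^{1/n}) ≥ 1, where Γ denotes the Euler Gamma function. -/
/-!
By Cauchy–Schwarz, `∑ |xᵢ| ≤ √n · ‖x‖₂`, so the Euclidean unit ball of `ℝⁿ` lies inside the
`ℓ¹`-ball of radius `√n`. Comparing the volumes `π^(n/2) / Γ(n/2 + 1)` and `(2√n)ⁿ / n!` of the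
two balls gives `Γ(3/2)ⁿ · n! ≤ n^(n/2) · Γ(n/2 + 1)`, since `√π = 2 Γ(3/2)`; the theorem is the
`n`-th root of this.
-/

open Real MeasureTheory Fintype Nat

theorem sum_abs_lt_sqrt_card_of_sum_sq_lt_one {ι : Type*} [Fintype ι] [Nonempty ι] {x : ι → ℝ}
    (hx : ∑ i, |x i| ^ 2 < 1) : ∑ i, |x i| < √(card ι) := by
  have cauchy_schwarz := sq_sum_le_card_mul_sum_sq (s := Finset.univ) (f := fun i => |x i|)
  rw [Finset.card_univ] at cauchy_schwarz
  rw [lt_sqrt (by positivity)]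
  nlinarith [(Nat.cast_pos.mpr card_pos : (0 : ℝ) < card ι)]

theorem gamma_three_halves_pow_mul_factorial_le (n : ℕ) :
    Gamma (1 / 2 + 1) ^ n * n ! ≤ √n ^ n * Gamma (n / 2 + 1) := by
  rcases n.eq_zero_or_pos with rfl | hn
  · simp
  have : Nonempty (Fin n) := ⟨⟨0, hn⟩⟩
  have ball_subset : {x : Fin n → ℝ | ∑ i, |x i| ^ (2 : ℝ) < 1} ⊆
      {x | (∑ i, |x i| ^ (1 : ℝ)) ^ (1 / (1 : ℝ)) < √(card (Fin n))} := fun x hx => by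
    simp only [Set.mem_ofPred_eq, rpow_one, div_one, rpow_two] at hx ⊢
    exact sum_abs_lt_sqrt_card_of_sum_sq_lt_one hx
  have volume_le := measure_mono (μ := volume) ball_subset
  rw [volume_sum_rpow_lt_one _ one_le_two, volume_sum_rpow_lt _ le_rfl,
    ← ENNReal.ofReal_pow (sqrt_nonneg _), ← ENNReal.ofReal_mul (by positivity),
    ENNReal.ofReal_le_ofReal_iff (by positivity)] at volume_le
  simp only [Fintype.card_fin, div_one, one_add_one_eq_two, Gamma_two,
    Gamma_nat_eq_factorial] at volume_le
  rw [div_le_iff₀ (Gamma_pos_of_pos (by positivity)), mul_pow] at volume_le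
  field_simp at volume_le ⊢
  exact volume_le

/-- For every integer `n ≥ 1`,
`n^(1/2) · Γ(1+n/2)^(1/n) / (Γ(1+1/2) · Γ(n+1)^(1/n)) ≥ 1`. -/
theorem gamma_half_ineq (n : ℕ) (hn : 1 ≤ n) :
    (n : ℝ) ^ ((1 : ℝ) / 2) * Real.Gamma (1 + (n : ℝ) / 2) ^ (1 / (n : ℝ)) /
        (Real.Gamma (1 + 1 / 2) * Real.Gamma ((n : ℝ) + 1) ^ (1 / (n : ℝ))) ≥ 1 := by
  have hn0 : n ≠ 0 := by omega
  have hΓ_half : 0 < Gamma (1 + (n : ℝ) / 2) := Gamma_pos_of_pos (by positivity)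
  have hΓ_succ : 0 < Gamma ((n : ℝ) + 1) := Gamma_pos_of_pos (by positivity)
  rw [ge_iff_le, one_le_div (by positivity)]
  refine le_of_pow_le_pow_left₀ hn0 (by positivity) ?_
  rw [mul_pow, mul_pow, one_div (n : ℝ), rpow_inv_natCast_pow hΓ_succ.le hn0,
    rpow_inv_natCast_pow hΓ_half.le hn0, ← sqrt_eq_rpow, Gamma_nat_eq_factorial, add_comm 1,
    add_comm 1]
  exact gamma_three_halves_pow_mul_factorial_le n
end
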